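/- arXiv:1612.03717 — 8 statements merged into one kernel-verified Lean document; each statement's English description precedes it below -/
import Mathlib

section
/- Fix N ≥ 2 and γ ≥ 0. The initial value problem B'' (z) = (N z/(1-z²)) B'(z) + (γ/(1-z²)²) B(z), B(0)=1, B'(0)=0, has a unique solution B on (-1,1), and if γ > 0 then B > 0 and B' > 0 on (0,1). -/
open Real Set Filter Topology

namespace HeunIVP

noncomputable def dcoef (β M : ℝ) : ℕ → ℝ
  | 0 => 1
  | (k+1) => dcoef β M k * (((k:ℝ)+β)*((k:ℝ)+β+M)) / (((k:ℝ)+1)*((k:ℝ)+1/2))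

variable {β M : ℝ}

lemma dcoef_pos (hβ : 0 < β) (hM : 0 ≤ M) : ∀ k, 0 < dcoef β M k := by
  intro k
  induction k with
  | zero => norm_num [dcoef]
  | succ k ih =>
    rw [dcoef]
    have h1 : (0:ℝ) < (k:ℝ)+β := by positivity
    have h2 : (0:ℝ) < (k:ℝ)+β+M := by positivity
    have h3 : (0:ℝ) < ((k:ℝ)+1)*((k:ℝ)+1/2) := by positivity
    positivity

lemma dcoef_summable (hβ : 0 < β) (hM : 0 ≤ M) {r : ℝ} (h0 : 0 ≤ r) (hr : r < 1) :
    Summable (fun k => dcoef β M k * r ^ k) := by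
  set r' : ℝ := (1+r)/2 with hr'def
  have hr'1 : r' < 1 := by rw [hr'def]; linarith
  apply summable_of_ratio_norm_eventually_le hr'1
  rw [eventually_atTop]
  refine ⟨⌈(2*β+M+β*(β+M)) / ((1-r)/2)⌉₊ + 1, fun k hk => ?_⟩
  have hd := dcoef_pos hβ hM (k := k)
  have hk1 : 1 ≤ k := le_trans (Nat.le_add_left 1 _) hk
  have hkr : (2*β+M+β*(β+M)) / ((1-r)/2) ≤ (k:ℝ) := by
    calc (2*β+M+β*(β+M)) / ((1-r)/2) ≤ (⌈(2*β+M+β*(β+M)) / ((1-r)/2)⌉₊ : ℝ) := Nat.le_ceil _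
    _ ≤ (k:ℝ) := by exact_mod_cast le_trans (Nat.le_succ _) hk
  have hden : (0:ℝ) < (1-r)/2 := by linarith
  have hkey : 2*β+M+β*(β+M) ≤ (k:ℝ) * ((1-r)/2) := by
    rw [div_le_iff₀ hden] at hkr; linarith [hkr]
  have hrec : dcoef β M (k+1) = dcoef β M k * (((k:ℝ)+β)*((k:ℝ)+β+M)) / (((k:ℝ)+1)*((k:ℝ)+1/2)) := rfl
  have hk1' : (1:ℝ) ≤ (k:ℝ) := by exact_mod_cast hk1
  have key : (((k:ℝ)+β)*((k:ℝ)+β+M)) * r ≤ r' * (((k:ℝ)+1)*((k:ℝ)+1/2)) := by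
    have e1 : ((k:ℝ)+β)*((k:ℝ)+β+M)*r = (k:ℝ)^2*r + ((2*β+M)*(k:ℝ) + β*(β+M))*r := by ring
    have e2 : ((2*β+M)*(k:ℝ) + β*(β+M))*r ≤ (2*β+M)*(k:ℝ) + β*(β+M) :=
      mul_le_of_le_one_right (by positivity) hr.le
    have hA : (2*β+M)*(k:ℝ) + β*(β+M) ≤ (2*β+M+β*(β+M))*(k:ℝ) := by
      nlinarith [mul_le_mul_of_nonneg_left hk1' (show (0:ℝ) ≤ β*(β+M) by positivity)]
    have hB : (2*β+M+β*(β+M))*(k:ℝ) ≤ ((k:ℝ)*((1-r)/2))*(k:ℝ) :=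
      mul_le_mul_of_nonneg_right hkey (Nat.cast_nonneg k)
    have e3 : (k:ℝ)^2*r + (k:ℝ)^2*((1-r)/2) ≤ r' * (((k:ℝ)+1)*((k:ℝ)+1/2)) := by
      rw [hr'def]; nlinarith [sq_nonneg (k:ℝ), hk1']
    nlinarith [e1, e2, hA, hB, e3]
  rw [Real.norm_eq_abs, Real.norm_eq_abs,
    abs_of_nonneg (mul_nonneg (dcoef_pos hβ hM _).le (pow_nonneg h0 _)),
    abs_of_nonneg (mul_nonneg (dcoef_pos hβ hM _).le (pow_nonneg h0 _))]
  rw [hrec, pow_succ]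
  rw [div_mul_eq_mul_div, div_le_iff₀ (by positivity)]
  calc dcoef β M k * ((↑k + β) * (↑k + β + M)) * (r ^ k * r)
      = (dcoef β M k * r ^ k) * (((k:ℝ)+β)*((k:ℝ)+β+M) * r) := by ring
    _ ≤ (dcoef β M k * r ^ k) * (r' * (((k:ℝ)+1)*((k:ℝ)+1/2))) := by
        apply mul_le_mul_of_nonneg_left key (by positivity)
    _ = r' * (dcoef β M k * r ^ k) * ((↑k + 1) * (↑k + 1 / 2)) := by ring

lemma dcoef_le (hβ : 0 < β) (hM : 0 ≤ M) {r : ℝ} (h0 : 0 ≤ r) (hr : r < 1) :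
    ∃ C : ℝ, 0 < C ∧ ∀ k, dcoef β M k * r ^ k ≤ C := by
  have hnn : ∀ j : ℕ, 0 ≤ dcoef β M j * r ^ j :=
    fun j => mul_nonneg (dcoef_pos hβ hM j).le (pow_nonneg h0 j)
  refine ⟨∑' k, dcoef β M k * r ^ k, ?_, fun k => ?_⟩
  · have := Summable.le_tsum (dcoef_summable hβ hM h0 hr) 0 (fun j _ => hnn j)
    simp only [pow_zero, mul_one] at this
    calc (0:ℝ) < dcoef β M 0 := dcoef_pos hβ hM 0
      _ ≤ _ := this
  · exact Summable.le_tsum (dcoef_summable hβ hM h0 hr) k (fun j _ => hnn j)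

lemma summable_shift (hβ : 0 < β) (hM : 0 ≤ M) (j m : ℕ) {x : ℝ} (hx : |x| < 1) :
    Summable (fun k : ℕ => ((k:ℝ))^j * dcoef β M (k+m) * x ^ k) := by
  obtain ⟨r₂, hrdef⟩ : ∃ r₂ : ℝ, r₂ = (1+|x|)/2 := ⟨_, rfl⟩
  have h0x : (0:ℝ) ≤ |x| := abs_nonneg x
  have hr₂0 : 0 < r₂ := by rw [hrdef]; linarith
  have hr₂1 : r₂ < 1 := by rw [hrdef]; linarith
  have hxr : |x| < r₂ := by rw [hrdef]; linarith
  obtain ⟨C, hC0, hC⟩ := dcoef_le hβ hM (le_of_lt hr₂0) hr₂1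
  rw [← summable_abs_iff]
  have hq1 : |x|/r₂ < 1 := by rw [div_lt_one hr₂0]; exact hxr
  have hsum : Summable (fun k : ℕ => (C / r₂^m) * ((k:ℝ)^j * (|x|/r₂)^k)) := by
    apply Summable.mul_left
    exact summable_pow_mul_geometric_of_norm_lt_one (R := ℝ) j (r := |x|/r₂)
      (by rw [Real.norm_eq_abs, abs_of_nonneg (by positivity)]; exact hq1)
  apply Summable.of_nonneg_of_le (fun k => abs_nonneg _) _ hsum
  intro k
  have hd := dcoef_pos hβ hM (k+m)
  have h1 : |((k:ℝ))^j * dcoef β M (k+m) * x ^ k| = ((k:ℝ))^j * dcoef β M (k+m) * |x| ^ k := by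
    rw [abs_mul, abs_mul, abs_pow, abs_pow, abs_of_nonneg (by positivity : (0:ℝ) ≤ (k:ℝ)),
      abs_of_pos hd]
  rw [h1]
  have hdb : dcoef β M (k+m) ≤ C / r₂^(k+m) := by
    rw [le_div_iff₀ (by positivity)]
    exact hC (k+m)
  calc ((k:ℝ))^j * dcoef β M (k+m) * |x| ^ k
      ≤ ((k:ℝ))^j * (C / r₂^(k+m)) * |x| ^ k := by
        apply mul_le_mul_of_nonneg_right (mul_le_mul_of_nonneg_left hdb (by positivity)) (by positivity)
    _ = (C / r₂^m) * ((k:ℝ)^j * (|x|/r₂)^k) := by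
        rw [pow_add, div_pow]
        ring




lemma hasDerivAt_tsum_pow (e : ℕ → ℝ) (he : ∀ k, 0 ≤ e k)
    (hs : ∀ x : ℝ, |x| < 1 → Summable (fun k : ℕ => e k * x ^ k))
    (hs' : ∀ x : ℝ, |x| < 1 → Summable (fun k : ℕ => ((k:ℝ)+1) * e (k+1) * x ^ k))
    {z : ℝ} (hz : |z| < 1) :
    HasDerivAt (fun y => ∑' k : ℕ, e k * y ^ k) (∑' k : ℕ, ((k:ℝ)+1) * e (k+1) * z ^ k) z := by
  obtain ⟨ρ, hρdef⟩ : ∃ ρ : ℝ, ρ = (|z|+1)/2 := ⟨_, rfl⟩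
  have h0z := abs_nonneg z
  have hzρ : |z| < ρ := by rw [hρdef]; linarith
  have hρ1 : ρ < 1 := by rw [hρdef]; linarith
  have hρ0 : 0 < ρ := by rw [hρdef]; linarith
  have hρa : |ρ| < 1 := by rw [abs_of_pos hρ0]; exact hρ1
  have hmem : z ∈ Ioo (-ρ) ρ := ⟨(abs_lt.mp hzρ).1, (abs_lt.mp hzρ).2⟩
  apply hasDerivAt_of_tendstoUniformlyOn (l := atTop)
    (f := fun (n:ℕ) (y:ℝ) => ∑ k ∈ Finset.range (n+1), e k * y ^ k)
    (f' := fun (n:ℕ) (y:ℝ) => ∑ k ∈ Finset.range n, ((k:ℝ)+1) * e (k+1) * y ^ k)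
    isOpen_Ioo ?_ ?_ ?_ hmem
  · apply tendstoUniformlyOn_tsum_nat (hs' ρ hρa)
    intro k y hy
    have hy' : |y| ≤ ρ := le_of_lt (abs_lt.mpr ⟨hy.1, hy.2⟩)
    have h1 : ‖((k:ℝ)+1) * e (k+1) * y ^ k‖ = ((k:ℝ)+1) * e (k+1) * |y| ^ k := by
      rw [Real.norm_eq_abs, abs_mul, abs_mul, abs_pow,
        abs_of_nonneg (by positivity : (0:ℝ) ≤ (k:ℝ)+1), abs_of_nonneg (he (k+1))]
    rw [h1]
    have := pow_le_pow_left₀ (abs_nonneg y) hy' k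
    have hnn : 0 ≤ ((k:ℝ)+1) * e (k+1) := by
      have := he (k+1); positivity
    exact mul_le_mul_of_nonneg_left this hnn
  · apply Filter.Eventually.of_forall
    intro n y hy
    have h : HasDerivAt (fun y : ℝ => ∑ k ∈ Finset.range (n+1), e k * y ^ k)
        (∑ k ∈ Finset.range (n+1), e k * ((k:ℝ) * y ^ (k-1))) y := by
      apply HasDerivAt.fun_sum
      intro k _
      exact (hasDerivAt_pow k y).const_mul (e k)
    refine h.congr_deriv (Eq.symm ?_)
    rw [Finset.sum_range_succ']
    simp only [Nat.cast_zero, pow_zero, Nat.zero_sub, zero_mul, mul_zero, add_zero,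
      Nat.cast_ofNat]
    apply Finset.sum_congr rfl
    intro k _
    push_cast
    ring
  · intro y hy
    have hy1 : |y| < 1 := lt_trans (abs_lt.mpr ⟨hy.1, hy.2⟩) hρ1
    have hsum := (hs y hy1).hasSum.tendsto_sum_nat
    exact hsum.comp (tendsto_add_atTop_nat 1)

noncomputable def Hf (β M : ℝ) (x : ℝ) : ℝ := ∑' k : ℕ, dcoef β M k * x ^ k
noncomputable def H1f (β M : ℝ) (x : ℝ) : ℝ := ∑' k : ℕ, ((k:ℝ)+1) * dcoef β M (k+1) * x ^ k
noncomputable def H2f (β M : ℝ) (x : ℝ) : ℝ :=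
  ∑' k : ℕ, (((k:ℝ)+1)*((k:ℝ)+2)) * dcoef β M (k+2) * x ^ k

variable {β M : ℝ}

lemma summable_H (hβ : 0 < β) (hM : 0 ≤ M) {x : ℝ} (hx : |x| < 1) :
    Summable (fun k : ℕ => dcoef β M k * x ^ k) := by
  have := summable_shift hβ hM 0 0 hx
  apply this.congr
  intro k; simp

lemma summable_H1 (hβ : 0 < β) (hM : 0 ≤ M) {x : ℝ} (hx : |x| < 1) :
    Summable (fun k : ℕ => ((k:ℝ)+1) * dcoef β M (k+1) * x ^ k) := by
  have := (summable_shift hβ hM 1 1 hx).add (summable_shift hβ hM 0 1 hx)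
  apply this.congr
  intro k; push_cast; ring

lemma summable_H2 (hβ : 0 < β) (hM : 0 ≤ M) {x : ℝ} (hx : |x| < 1) :
    Summable (fun k : ℕ => (((k:ℝ)+1)*((k:ℝ)+2)) * dcoef β M (k+2) * x ^ k) := by
  have := ((summable_shift hβ hM 2 2 hx).add ((summable_shift hβ hM 1 2 hx).mul_left 3)).add
    ((summable_shift hβ hM 0 2 hx).mul_left 2)
  apply this.congr
  intro k; push_cast; ring

lemma hasDerivAt_Hf (hβ : 0 < β) (hM : 0 ≤ M) {z : ℝ} (hz : |z| < 1) :
    HasDerivAt (Hf β M) (H1f β M z) z :=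
  hasDerivAt_tsum_pow _ (fun k => (dcoef_pos hβ hM k).le)
    (fun _ hx => summable_H hβ hM hx) (fun _ hx => summable_H1 hβ hM hx) hz

lemma hasDerivAt_H1f (hβ : 0 < β) (hM : 0 ≤ M) {z : ℝ} (hz : |z| < 1) :
    HasDerivAt (H1f β M) (H2f β M z) z := by
  have key := hasDerivAt_tsum_pow (fun k : ℕ => ((k:ℝ)+1) * dcoef β M (k+1))
    (fun k => by have := (dcoef_pos hβ hM (k+1)).le; positivity)
    (fun x hx => summable_H1 hβ hM hx)
    (fun x hx => by
      apply (summable_H2 hβ hM hx).congr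
      intro k; push_cast; ring) hz
  have h2 : (∑' k : ℕ, ((k:ℝ)+1) * ((((k+1):ℕ):ℝ)+1) * dcoef β M ((k+1)+1) * z ^ k)
      = H2f β M z := by
    apply tsum_congr; intro k; push_cast; ring
  rw [show H2f β M z = ∑' k : ℕ, ((k:ℝ)+1) * ((fun k : ℕ => ((k:ℝ)+1) * dcoef β M (k+1)) (k+1)) * z ^ k from ?_]
  · exact key
  · apply tsum_congr; intro k; push_cast; ring

lemma Hf_zero : Hf β M 0 = 1 := by
  rw [Hf, tsum_eq_single 0 (fun k hk => by simp [zero_pow hk])]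
  simp [dcoef]


variable {β M : ℝ} {x : ℝ}

lemma dcoef_one : dcoef β M 1 = 2*(β*(β+M)) := by
  have h : dcoef β M 1
      = dcoef β M 0 * ((((0:ℕ):ℝ)+β)*(((0:ℕ):ℝ)+β+M)) / ((((0:ℕ):ℝ)+1)*(((0:ℕ):ℝ)+1/2)) := rfl
  have h0 : dcoef β M 0 = 1 := rfl
  rw [h, h0]
  push_cast
  field_simp
  ring

lemma H_ode (hβ : 0 < β) (hM : 0 ≤ M) (hx : |x| < 1) :
    x*(1-x)*H2f β M x + (1/2 - (2*β+M+1)*x)*H1f β M x - (β*(β+M))*Hf β M x = 0 := by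
  -- summabilities
  have Sg2 : Summable (fun k : ℕ => (((k:ℝ)+1)*((k:ℝ)+2)) * dcoef β M (k+2) * x^(k+1)) := by
    apply ((summable_H2 hβ hM hx).mul_right x).congr
    intro k; rw [pow_succ]; ring
  have Sg2' : Summable (fun k : ℕ => ((k:ℝ)*((k:ℝ)+1)) * dcoef β M (k+1) * x^(k+1)) := by
    apply ((((summable_shift hβ hM 2 1 hx).add (summable_shift hβ hM 1 1 hx)).mul_right x)).congr
    intro k; rw [pow_succ]; push_cast; ring
  have Sg1 : Summable (fun k : ℕ => ((k:ℝ)+2) * dcoef β M (k+2) * x^(k+1)) := by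
    apply (((summable_shift hβ hM 1 2 hx).add ((summable_shift hβ hM 0 2 hx).mul_left 2)).mul_right x).congr
    intro k; rw [pow_succ]; push_cast; ring
  have Sg1' : Summable (fun k : ℕ => ((k:ℝ)+1) * dcoef β M (k+1) * x^(k+1)) := by
    apply ((summable_H1 hβ hM hx).mul_right x).congr
    intro k; rw [pow_succ]; ring
  have Sg0 : Summable (fun k : ℕ => dcoef β M (k+1) * x^(k+1)) := by
    apply ((summable_shift hβ hM 0 1 hx).mul_right x).congr
    intro k; rw [pow_succ]; push_cast; ring
  -- identities
  have I2 : x * H2f β M x = ∑' k : ℕ, (((k:ℝ)+1)*((k:ℝ)+2)) * dcoef β M (k+2) * x^(k+1) := by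
    rw [H2f, ← tsum_mul_left]
    exact tsum_congr (fun k => by rw [pow_succ]; ring)
  have I2' : x^2 * H2f β M x = ∑' k : ℕ, ((k:ℝ)*((k:ℝ)+1)) * dcoef β M (k+1) * x^(k+1) := by
    rw [H2f, ← tsum_mul_left, Summable.tsum_eq_zero_add Sg2']
    norm_num
    exact tsum_congr (fun k => by push_cast; ring)
  have I1 : H1f β M x = 2*(β*(β+M)) + ∑' k : ℕ, ((k:ℝ)+2) * dcoef β M (k+2) * x^(k+1) := by
    rw [H1f, Summable.tsum_eq_zero_add (summable_H1 hβ hM hx)]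
    congr 1
    · norm_num [dcoef_one]
    · exact tsum_congr (fun k => by push_cast; ring)
  have I1' : x * H1f β M x = ∑' k : ℕ, ((k:ℝ)+1) * dcoef β M (k+1) * x^(k+1) := by
    rw [H1f, ← tsum_mul_left]
    exact tsum_congr (fun k => by rw [pow_succ]; ring)
  have I0 : Hf β M x = 1 + ∑' k : ℕ, dcoef β M (k+1) * x^(k+1) := by
    rw [Hf, Summable.tsum_eq_zero_add (summable_H hβ hM hx)]
    congr 1
    simp [dcoef]
  -- assemble
  have expand : x*(1-x)*H2f β M x + (1/2 - (2*β+M+1)*x)*H1f β M x - (β*(β+M))*Hf β M x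
      = (x * H2f β M x) - (x^2 * H2f β M x) + (1/2) * H1f β M x
        - (2*β+M+1) * (x * H1f β M x) - (β*(β+M)) * Hf β M x := by ring
  rw [expand, I2, I2', I1', I1, I0]
  have hzero : ∀ k : ℕ,
      (((k:ℝ)+1)*((k:ℝ)+2)) * dcoef β M (k+2) * x^(k+1)
      - ((k:ℝ)*((k:ℝ)+1)) * dcoef β M (k+1) * x^(k+1)
      + (1/2) * (((k:ℝ)+2) * dcoef β M (k+2) * x^(k+1))
      - (2*β+M+1) * (((k:ℝ)+1) * dcoef β M (k+1) * x^(k+1))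
      - (β*(β+M)) * (dcoef β M (k+1) * x^(k+1)) = 0 := by
    intro k
    have hrec : dcoef β M (k+2)
        = dcoef β M (k+1) * ((((k:ℝ)+1)+β)*(((k:ℝ)+1)+β+M)) / ((((k:ℝ)+1)+1)*(((k:ℝ)+1)+1/2)) := by
      show dcoef β M ((k+1)+1) = _
      rw [dcoef]
      push_cast
      ring
    rw [hrec]
    have hne : ((((k:ℝ)+1)+1)*(((k:ℝ)+1)+1/2)) ≠ 0 := by positivity
    field_simp
    ring
  have key : (∑' k : ℕ, ((((((k:ℝ)+1)*((k:ℝ)+2)) * dcoef β M (k+2) * x^(k+1)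
      - ((k:ℝ)*((k:ℝ)+1)) * dcoef β M (k+1) * x^(k+1))
      + (1/2) * (((k:ℝ)+2) * dcoef β M (k+2) * x^(k+1)))
      - (2*β+M+1) * (((k:ℝ)+1) * dcoef β M (k+1) * x^(k+1))
      - (β*(β+M)) * (dcoef β M (k+1) * x^(k+1)))) = 0 := by
    rw [tsum_congr (fun k => by linarith [hzero k] : ∀ k : ℕ, ((((((k:ℝ)+1)*((k:ℝ)+2)) * dcoef β M (k+2) * x^(k+1)
      - ((k:ℝ)*((k:ℝ)+1)) * dcoef β M (k+1) * x^(k+1))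
      + (1/2) * (((k:ℝ)+2) * dcoef β M (k+2) * x^(k+1)))
      - (2*β+M+1) * (((k:ℝ)+1) * dcoef β M (k+1) * x^(k+1))
      - (β*(β+M)) * (dcoef β M (k+1) * x^(k+1))) = (0:ℝ))]
    exact tsum_zero
  have split : (∑' k : ℕ, ((((((k:ℝ)+1)*((k:ℝ)+2)) * dcoef β M (k+2) * x^(k+1)
      - ((k:ℝ)*((k:ℝ)+1)) * dcoef β M (k+1) * x^(k+1))
      + (1/2) * (((k:ℝ)+2) * dcoef β M (k+2) * x^(k+1)))
      - (2*β+M+1) * (((k:ℝ)+1) * dcoef β M (k+1) * x^(k+1))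
      - (β*(β+M)) * (dcoef β M (k+1) * x^(k+1))))
      = (∑' k : ℕ, (((k:ℝ)+1)*((k:ℝ)+2)) * dcoef β M (k+2) * x^(k+1))
        - (∑' k : ℕ, ((k:ℝ)*((k:ℝ)+1)) * dcoef β M (k+1) * x^(k+1))
        + (1/2) * (∑' k : ℕ, ((k:ℝ)+2) * dcoef β M (k+2) * x^(k+1))
        - (2*β+M+1) * (∑' k : ℕ, ((k:ℝ)+1) * dcoef β M (k+1) * x^(k+1))
        - (β*(β+M)) * (∑' k : ℕ, dcoef β M (k+1) * x^(k+1)) := by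
    rw [Summable.tsum_sub ((((Sg2.sub Sg2').add (Sg1.mul_left (1/2))).sub (Sg1'.mul_left (2*β+M+1))))
        (Sg0.mul_left (β*(β+M))),
      Summable.tsum_sub ((Sg2.sub Sg2').add (Sg1.mul_left (1/2))) (Sg1'.mul_left (2*β+M+1)),
      Summable.tsum_add (Sg2.sub Sg2') (Sg1.mul_left (1/2)),
      Summable.tsum_sub Sg2 Sg2', tsum_mul_left, tsum_mul_left, tsum_mul_left]
  rw [split] at key
  linear_combination key
lemma Hf_pos (hβ : 0 < β) (hM : 0 ≤ M) (hx0 : 0 ≤ x) (hx1 : x < 1) : 0 < Hf β M x := by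
  have hx : |x| < 1 := by rw [abs_of_nonneg hx0]; exact hx1
  apply Summable.tsum_pos (summable_H hβ hM hx)
    (fun k => mul_nonneg (dcoef_pos hβ hM k).le (pow_nonneg hx0 k)) 0
  simp [dcoef]

lemma bracket_pos (hβ : 0 < β) (hM : 1/2 ≤ M) (hx0 : 0 < x) (hx1 : x < 1) :
    0 < (1-x)*H1f β M x - β*Hf β M x := by
  have hM0 : 0 ≤ M := by linarith
  have hx : |x| < 1 := by rw [abs_of_nonneg hx0.le]; exact hx1
  have SxH1 : Summable (fun k : ℕ => (k:ℝ) * dcoef β M k * x^k) := by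
    apply (summable_shift hβ hM0 1 0 hx).congr
    intro k; push_cast; ring
  have J : x * H1f β M x = ∑' k : ℕ, (k:ℝ) * dcoef β M k * x^k := by
    rw [H1f, ← tsum_mul_left, Summable.tsum_eq_zero_add SxH1]
    norm_num
    exact tsum_congr (fun k => by rw [pow_succ]; push_cast; ring)
  have E : (1-x)*H1f β M x - β*Hf β M x
      = ∑' k : ℕ, (((k:ℝ)+1) * dcoef β M (k+1) - ((k:ℝ)+β) * dcoef β M k) * x^k := by
    have expand : (1-x)*H1f β M x - β*Hf β M x
        = H1f β M x - x * H1f β M x - β * Hf β M x := by ring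
    rw [expand, J, H1f, Hf, ← tsum_mul_left (a := β),
      ← Summable.tsum_sub (summable_H1 hβ hM0 hx) SxH1,
      ← Summable.tsum_sub ((summable_H1 hβ hM0 hx).sub SxH1) ((summable_H hβ hM0 hx).mul_left β)]
    exact tsum_congr (fun k => by ring)
  rw [E]
  have Ssum : Summable (fun k : ℕ => (((k:ℝ)+1) * dcoef β M (k+1) - ((k:ℝ)+β) * dcoef β M k) * x^k) := by
    apply (((summable_H1 hβ hM0 hx).sub SxH1).sub ((summable_H hβ hM0 hx).mul_left β)).congr
    intro k; ring
  have coefnn : ∀ k : ℕ, 0 ≤ ((k:ℝ)+1) * dcoef β M (k+1) - ((k:ℝ)+β) * dcoef β M k := by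
    intro k
    have hd : dcoef β M (k+1) = dcoef β M k * (((k:ℝ)+β)*((k:ℝ)+β+M)) / (((k:ℝ)+1)*((k:ℝ)+1/2)) := rfl
    have hD := dcoef_pos hβ hM0 k
    rw [hd, sub_nonneg, mul_div_assoc', le_div_iff₀ (by positivity : (0:ℝ) < ((k:ℝ)+1)*((k:ℝ)+1/2))]
    have hint : 0 ≤ (((k:ℝ)+1) * dcoef β M k * ((k:ℝ)+β)) * (β+M-1/2) := by
      apply mul_nonneg (mul_nonneg (mul_nonneg (by positivity) hD.le) (by positivity))
      linarith
    nlinarith [hint]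
  apply Summable.tsum_pos Ssum (fun k => mul_nonneg (coefnn k) (pow_nonneg hx0.le k)) 0
  simp only [show dcoef β M 0 = 1 from rfl, Nat.cast_zero, pow_zero, mul_one]
  norm_num [dcoef_one]
  nlinarith [hβ, hM]

noncomputable def Bfun (β M : ℝ) (z : ℝ) : ℝ := (1-z^2) ^ β * Hf β M (z^2)
noncomputable def Bfun' (β M : ℝ) (z : ℝ) : ℝ :=
  2*z*(1-z^2)^(β-1) * ((1-z^2) * H1f β M (z^2) - β * Hf β M (z^2))

lemma hasDerivAt_Bfun (hβ : 0 < β) (hM0 : 0 ≤ M) {z : ℝ} (hz : z ∈ Ioo (-1:ℝ) 1) :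
    HasDerivAt (Bfun β M) (Bfun' β M z) z := by
  have hz1 : z^2 < 1 := by nlinarith [hz.1, hz.2]
  have hw : (0:ℝ) < 1 - z^2 := by linarith
  have hx : |z^2| < 1 := by rw [abs_of_nonneg (sq_nonneg z)]; exact hz1
  have hsq : HasDerivAt (fun z : ℝ => z^2) (2*z) z := by simpa using hasDerivAt_pow 2 z
  have hinner : HasDerivAt (fun z : ℝ => 1 - z^2) (-(2*z)) z := by simpa using hsq.const_sub 1
  have hpow : HasDerivAt (fun z : ℝ => (1-z^2) ^ β) (-(2*z) * β * (1-z^2)^(β-1)) z :=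
    hinner.rpow_const (Or.inl hw.ne')
  have hH : HasDerivAt (fun z : ℝ => Hf β M (z^2)) (H1f β M (z^2) * (2*z)) z :=
    HasDerivAt.comp (h := fun y : ℝ => y ^ 2) z (hasDerivAt_Hf hβ hM0 hx) hsq
  have total := hpow.mul hH
  refine total.congr_deriv (Eq.symm ?_)
  have hrw : (1-z^2)^β = (1-z^2)^(β-1) * (1-z^2) := by
    conv_lhs => rw [show β = β-1+1 by ring]
    rw [Real.rpow_add hw, Real.rpow_one]
  simp only [Bfun']
  rw [hrw]
  ring

lemma hasDerivAt_Bfun' (hβ : 0 < β) (hM : 1/2 ≤ M) {z : ℝ} (hz : z ∈ Ioo (-1:ℝ) 1) :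
    HasDerivAt (Bfun' β M) ((2*M+1)*z/(1-z^2) * Bfun' β M z
      + (4*β^2+(4*M-2)*β)/(1-z^2)^2 * Bfun β M z) z := by
  have hM0 : 0 ≤ M := by linarith
  have hz1 : z^2 < 1 := by nlinarith [hz.1, hz.2]
  have hw : (0:ℝ) < 1 - z^2 := by linarith
  have hx : |z^2| < 1 := by rw [abs_of_nonneg (sq_nonneg z)]; exact hz1
  have hsq : HasDerivAt (fun z : ℝ => z^2) (2*z) z := by simpa using hasDerivAt_pow 2 z
  have hinner : HasDerivAt (fun z : ℝ => 1 - z^2) (-(2*z)) z := by simpa using hsq.const_sub 1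
  have hpow2 : HasDerivAt (fun z : ℝ => (1-z^2) ^ (β-1)) (-(2*z) * (β-1) * (1-z^2)^(β-1-1)) z :=
    hinner.rpow_const (Or.inl hw.ne')
  have hH : HasDerivAt (fun z : ℝ => Hf β M (z^2)) (H1f β M (z^2) * (2*z)) z :=
    HasDerivAt.comp (h := fun y : ℝ => y ^ 2) z (hasDerivAt_Hf hβ hM0 hx) hsq
  have hH1 : HasDerivAt (fun z : ℝ => H1f β M (z^2)) (H2f β M (z^2) * (2*z)) z :=
    HasDerivAt.comp (h := fun y : ℝ => y ^ 2) z (hasDerivAt_H1f hβ hM0 hx) hsq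
  have hG : HasDerivAt (fun z : ℝ => (1-z^2) * H1f β M (z^2) - β * Hf β M (z^2))
      (-(2*z) * H1f β M (z^2) + (1-z^2) * (H2f β M (z^2) * (2*z))
        - β * (H1f β M (z^2) * (2*z))) z :=
    (hinner.mul hH1).sub (hH.const_mul β)
  have h2z : HasDerivAt (fun z : ℝ => 2*z) 2 z := by simpa using (hasDerivAt_id z).const_mul 2
  have houter : HasDerivAt (fun z : ℝ => 2*z*(1-z^2)^(β-1))
      (2 * (1-z^2)^(β-1) + 2*z*(-(2*z) * (β-1) * (1-z^2)^(β-1-1))) z := h2z.mul hpow2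
  have total := houter.mul hG
  refine total.congr_deriv (Eq.symm ?_)
  have hst := H_ode hβ hM0 hx
  have hA : (1-z^2)^(β-1) = (1-z^2)^(β-2) * (1-z^2) := by
    conv_lhs => rw [show β-1 = β-2+1 by ring]
    rw [Real.rpow_add hw, Real.rpow_one]
  have hB : (1-z^2)^β = (1-z^2)^(β-2) * (1-z^2)^2 := by
    conv_lhs => rw [show β = β-2+2 by ring]
    rw [Real.rpow_add hw, show (2:ℝ) = ((2:ℕ):ℝ) by norm_num, Real.rpow_natCast]
  have hC : (1-z^2)^(β-1-1) = (1-z^2)^(β-2) := by rw [show β-1-1 = β-2 by ring]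
  have e1 : (2*M+1)*z/(1-z^2) * Bfun' β M z
      = (1-z^2)^(β-2) * ((2*M+1)*(2*z^2)*((1-z^2) * H1f β M (z^2) - β * Hf β M (z^2))) := by
    simp only [Bfun']
    rw [hA]
    field_simp
  have e2 : (4*β^2+(4*M-2)*β)/(1-z^2)^2 * Bfun β M z
      = (1-z^2)^(β-2) * ((4*β^2+(4*M-2)*β) * Hf β M (z^2)) := by
    simp only [Bfun]
    rw [hB]
    field_simp
  rw [e1, e2, hA, hC]
  linear_combination (-(4*(1-z^2)*(1-z^2)^(β-2))) * hst

lemma Bfun_zero : Bfun β M 0 = 1 := by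
  simp [Bfun, Hf_zero]

lemma Bfun'_zero : Bfun' β M 0 = 0 := by
  simp [Bfun']

lemma Bfun_pos (hβ : 0 < β) (hM0 : 0 ≤ M) {z : ℝ} (hz : z ∈ Ioo (0:ℝ) 1) :
    0 < Bfun β M z := by
  have hz1 : z^2 < 1 := by nlinarith [hz.1, hz.2]
  have hw : (0:ℝ) < 1 - z^2 := by linarith
  exact mul_pos (Real.rpow_pos_of_pos hw β) (Hf_pos hβ hM0 (sq_nonneg z) hz1)

lemma Bfun'_pos (hβ : 0 < β) (hM : 1/2 ≤ M) {z : ℝ} (hz : z ∈ Ioo (0:ℝ) 1) :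
    0 < Bfun' β M z := by
  have hz1 : z^2 < 1 := by nlinarith [hz.1, hz.2]
  have hw : (0:ℝ) < 1 - z^2 := by linarith
  have hx0 : 0 < z^2 := pow_pos hz.1 2
  exact mul_pos (mul_pos (by linarith [hz.1] : (0:ℝ) < 2*z) (Real.rpow_pos_of_pos hw (β-1)))
    (bracket_pos hβ hM hx0 hz1)

set_option maxHeartbeats 1000000 in
lemma uniq (N : ℕ) (γ : ℝ) (hγ : 0 ≤ γ) (B B' C C' : ℝ → ℝ)
    (hB1 : ∀ z ∈ Ioo (-1:ℝ) 1, HasDerivAt B (B' z) z)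
    (hB2 : ∀ z ∈ Ioo (-1:ℝ) 1,
      HasDerivAt B' ((N:ℝ) * z / (1 - z^2) * B' z + γ / (1 - z^2)^2 * B z) z)
    (hC1 : ∀ z ∈ Ioo (-1:ℝ) 1, HasDerivAt C (C' z) z)
    (hC2 : ∀ z ∈ Ioo (-1:ℝ) 1,
      HasDerivAt C' ((N:ℝ) * z / (1 - z^2) * C' z + γ / (1 - z^2)^2 * C z) z)
    (h0 : C 0 = B 0) (h0' : C' 0 = B' 0) :
    ∀ z ∈ Ioo (-1:ℝ) 1, C z = B z := by
  intro z hz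
  obtain ⟨r, hrdef⟩ : ∃ r : ℝ, r = (|z|+1)/2 := ⟨_, rfl⟩
  have hz1 : |z| < 1 := abs_lt.mpr ⟨hz.1, hz.2⟩
  have h0z := abs_nonneg z
  have hr1 : r < 1 := by rw [hrdef]; linarith
  have hzr : |z| < r := by rw [hrdef]; linarith
  have hr0 : 0 < r := by rw [hrdef]; linarith
  have hrr : (0:ℝ) < 1 - r^2 := by nlinarith
  obtain ⟨L, hLdef⟩ : ∃ L : ℝ, L = 1 + (N:ℝ)/(1-r^2) + γ/(1-r^2)^2 := ⟨_, rfl⟩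
  have hL1 : 1 ≤ L := by
    rw [hLdef]
    have h1 : 0 ≤ (N:ℝ)/(1-r^2) := by positivity
    have h2 : 0 ≤ γ/(1-r^2)^2 := by positivity
    linarith
  have hL0 : 0 ≤ L := by linarith
  obtain ⟨v, hvdef⟩ : ∃ v : ℝ → ℝ × ℝ → ℝ × ℝ, v = fun t p =>
      if t ∈ Ioo (-r) r then (p.2, (N:ℝ) * t / (1 - t^2) * p.2 + γ / (1 - t^2)^2 * p.1)
      else (p.2, 0) := ⟨_, rfl⟩
  have hsub : Ioo (-r) r ⊆ Ioo (-1:ℝ) 1 := fun t ht => ⟨by linarith [ht.1], by linarith [ht.2]⟩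
  have hlip : ∀ t, LipschitzOnWith (Real.toNNReal L) (v t) univ := by
    intro t
    rw [lipschitzOnWith_iff_dist_le_mul]
    intro p _ q _
    rw [Real.coe_toNNReal L hL0]
    have hmax1 : dist p.1 q.1 ≤ dist p q := by rw [Prod.dist_eq]; exact le_max_left _ _
    have hmax2 : dist p.2 q.2 ≤ dist p q := by rw [Prod.dist_eq]; exact le_max_right _ _
    have hdnn : 0 ≤ dist p q := dist_nonneg
    by_cases ht : t ∈ Ioo (-r) r
    · have hvp : v t p = (p.2, (N:ℝ) * t / (1 - t^2) * p.2 + γ / (1 - t^2)^2 * p.1) := by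
        rw [hvdef]; simp only [if_pos ht]
      have hvq : v t q = (q.2, (N:ℝ) * t / (1 - t^2) * q.2 + γ / (1 - t^2)^2 * q.1) := by
        rw [hvdef]; simp only [if_pos ht]
      have htr : |t| ≤ r := le_of_lt (abs_lt.mpr ⟨ht.1, ht.2⟩)
      have ht2 : t^2 ≤ r^2 := by nlinarith [abs_nonneg t, sq_abs t]
      have hwt : (0:ℝ) < 1 - t^2 := by linarith
      have hbN : |(N:ℝ) * t / (1 - t^2)| ≤ (N:ℝ)/(1-r^2) := by
        rw [abs_div, abs_mul, abs_of_pos hwt, Nat.abs_cast]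
        rw [div_le_div_iff₀ hwt hrr]
        have hN0 : (0:ℝ) ≤ (N:ℝ) := Nat.cast_nonneg N
        have h1 : (N:ℝ) * |t| ≤ (N:ℝ)*r := mul_le_mul_of_nonneg_left htr hN0
        have h2 : (N:ℝ) * |t| * (1-r^2) ≤ (N:ℝ)*r*(1-r^2) := mul_le_mul_of_nonneg_right h1 hrr.le
        have h3 : (N:ℝ)*r*(1-r^2) ≤ (N:ℝ)*1*(1-r^2) :=
          mul_le_mul_of_nonneg_right (mul_le_mul_of_nonneg_left hr1.le hN0) hrr.le
        have h4 : (N:ℝ)*(1-r^2) ≤ (N:ℝ)*(1-t^2) := mul_le_mul_of_nonneg_left (by linarith) hN0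
        linarith
      have hbγ : |γ / (1 - t^2)^2| ≤ γ/(1-r^2)^2 := by
        rw [abs_div, abs_of_nonneg hγ, abs_of_pos (by positivity : (0:ℝ) < (1-t^2)^2)]
        apply div_le_div₀ hγ le_rfl (by positivity)
        nlinarith
      rw [hvp, hvq, Prod.dist_eq]
      dsimp only
      apply max_le
      · calc dist p.2 q.2 ≤ dist p q := hmax2
          _ ≤ L * dist p q := by nlinarith
      · rw [Real.dist_eq]
        have expand : (N:ℝ) * t / (1 - t^2) * p.2 + γ / (1 - t^2)^2 * p.1
            - ((N:ℝ) * t / (1 - t^2) * q.2 + γ / (1 - t^2)^2 * q.1)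
            = (N:ℝ) * t / (1 - t^2) * (p.2 - q.2) + γ / (1 - t^2)^2 * (p.1 - q.1) := by ring
        rw [expand]
        have hd1 : |p.1 - q.1| ≤ dist p q := by rw [← Real.dist_eq]; exact hmax1
        have hd2 : |p.2 - q.2| ≤ dist p q := by rw [← Real.dist_eq]; exact hmax2
        calc |(N:ℝ) * t / (1 - t^2) * (p.2 - q.2) + γ / (1 - t^2)^2 * (p.1 - q.1)|
            ≤ |(N:ℝ) * t / (1 - t^2) * (p.2 - q.2)| + |γ / (1 - t^2)^2 * (p.1 - q.1)| :=
              abs_add_le _ _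
          _ = |(N:ℝ) * t / (1 - t^2)| * |p.2 - q.2| + |γ / (1 - t^2)^2| * |p.1 - q.1| := by
              rw [abs_mul, abs_mul]
          _ ≤ L * dist p q := by
              rw [hLdef]
              nlinarith [mul_le_mul hbN hd2 (abs_nonneg _) (by positivity : (0:ℝ) ≤ (N:ℝ)/(1-r^2)),
                mul_le_mul hbγ hd1 (abs_nonneg _) (by positivity : (0:ℝ) ≤ γ/(1-r^2)^2),
                abs_nonneg ((N:ℝ) * t / (1 - t^2)), abs_nonneg (γ / (1 - t^2)^2)]
    · have hvp : v t p = (p.2, 0) := by rw [hvdef]; simp only [if_neg ht]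
      have hvq : v t q = (q.2, 0) := by rw [hvdef]; simp only [if_neg ht]
      rw [hvp, hvq, Prod.dist_eq]
      dsimp only
      apply max_le
      · calc dist p.2 q.2 ≤ dist p q := hmax2
          _ ≤ L * dist p q := by nlinarith
      · rw [Real.dist_eq, sub_self, abs_zero]
        positivity
  have hmem0 : (0:ℝ) ∈ Ioo (-r) r := ⟨by linarith, hr0⟩
  have hf : ∀ t ∈ Ioo (-r) r,
      HasDerivAt (fun t => (C t, C' t)) (v t (C t, C' t)) t ∧ (C t, C' t) ∈ univ := by
    intro t ht
    refine ⟨?_, mem_univ _⟩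
    have : v t (C t, C' t)
        = (C' t, (N:ℝ) * t / (1 - t^2) * C' t + γ / (1 - t^2)^2 * C t) := by
      rw [hvdef]; simp only [if_pos ht]
    rw [this]
    exact (hC1 t (hsub ht)).prodMk (hC2 t (hsub ht))
  have hg : ∀ t ∈ Ioo (-r) r,
      HasDerivAt (fun t => (B t, B' t)) (v t (B t, B' t)) t ∧ (B t, B' t) ∈ univ := by
    intro t ht
    refine ⟨?_, mem_univ _⟩
    have : v t (B t, B' t)
        = (B' t, (N:ℝ) * t / (1 - t^2) * B' t + γ / (1 - t^2)^2 * B t) := by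
      rw [hvdef]; simp only [if_pos ht]
    rw [this]
    exact (hB1 t (hsub ht)).prodMk (hB2 t (hsub ht))
  have heq : (fun t => (C t, C' t)) 0 = (fun t => (B t, B' t)) 0 := by
    simp only [h0, h0', Prod.mk.injEq, and_self]
  have h := ODE_solution_unique_of_mem_Ioo (fun t _ => hlip t) hmem0 hf hg heq
    (show z ∈ Ioo (-r) r from ⟨(abs_lt.mp hzr).1, (abs_lt.mp hzr).2⟩)
  exact congrArg Prod.fst h

end HeunIVP

open HeunIVP in
/-- For `N ≥ 2` and `γ ≥ 0`, the IVP
`B'' = (Nz/(1-z²)) B' + (γ/(1-z²)²) B`, `B(0)=1`, `B'(0)=0` has a unique solution on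
`(-1,1)`, and if `γ > 0` then `B > 0` and `B' > 0` on `(0,1)`. -/
theorem heun_ivp_unique_solution (N : ℕ) (hN : 2 ≤ N) (γ : ℝ) (hγ : 0 ≤ γ) :
    ∃ B B' : ℝ → ℝ,
      (∀ z ∈ Ioo (-1:ℝ) 1, HasDerivAt B (B' z) z) ∧
      (∀ z ∈ Ioo (-1:ℝ) 1,
        HasDerivAt B' ((N:ℝ) * z / (1 - z^2) * B' z + γ / (1 - z^2)^2 * B z) z) ∧
      B 0 = 1 ∧ B' 0 = 0 ∧
      (∀ C C' : ℝ → ℝ,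
        (∀ z ∈ Ioo (-1:ℝ) 1, HasDerivAt C (C' z) z) →
        (∀ z ∈ Ioo (-1:ℝ) 1,
          HasDerivAt C' ((N:ℝ) * z / (1 - z^2) * C' z + γ / (1 - z^2)^2 * C z) z) →
        C 0 = 1 → C' 0 = 0 → ∀ z ∈ Ioo (-1:ℝ) 1, C z = B z) ∧
      (0 < γ → ∀ z ∈ Ioo (0:ℝ) 1, 0 < B z ∧ 0 < B' z) := by
  rcases eq_or_lt_of_le hγ with hγ0 | hγpos
  · -- case γ = 0
    have hB1 : ∀ z ∈ Ioo (-1:ℝ) 1, HasDerivAt (fun _ : ℝ => (1:ℝ)) ((fun _ : ℝ => (0:ℝ)) z) z :=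
      fun z _ => hasDerivAt_const z 1
    have hB2 : ∀ z ∈ Ioo (-1:ℝ) 1, HasDerivAt (fun _ : ℝ => (0:ℝ))
        ((N:ℝ) * z / (1 - z^2) * (fun _ : ℝ => (0:ℝ)) z
          + γ / (1 - z^2)^2 * (fun _ : ℝ => (1:ℝ)) z) z := by
      intro z _
      refine (hasDerivAt_const z (0:ℝ)).congr_deriv (Eq.symm ?_)
      simp [← hγ0]
    refine ⟨fun _ => 1, fun _ => 0, hB1, hB2, rfl, rfl, ?_, ?_⟩
    · intro C C' hC1 hC2 hC0 hC0'
      exact HeunIVP.uniq N γ hγ _ _ C C' hB1 hB2 hC1 hC2 (by rw [hC0]) (by rw [hC0'])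
    · intro h
      rw [← hγ0] at h
      exact absurd h (lt_irrefl 0)
  · -- case γ > 0
    obtain ⟨M, hMdef⟩ : ∃ M : ℝ, M = ((N:ℝ)-1)/2 := ⟨_, rfl⟩
    have hN2 : (2:ℝ) ≤ (N:ℝ) := by exact_mod_cast hN
    have hM : 1/2 ≤ M := by rw [hMdef]; linarith
    have hM0 : 0 ≤ M := by linarith
    have hNM : (N:ℝ) = 2*M+1 := by rw [hMdef]; ring
    obtain ⟨β, hβ, hγeq⟩ : ∃ β : ℝ, 0 < β ∧ 4*β^2 + (4*M-2)*β = γ := by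
      obtain ⟨X, hXdef⟩ : ∃ X : ℝ, X = ((N:ℝ)-2)^2 + 4*γ := ⟨_, rfl⟩
      have hX0 : 0 ≤ X := by rw [hXdef]; positivity
      have hs2 : Real.sqrt X ^ 2 = X := Real.sq_sqrt hX0
      refine ⟨(Real.sqrt X - ((N:ℝ)-2))/4, ?_, ?_⟩
      · have h1 : ((N:ℝ)-2) < Real.sqrt X := by
          apply (Real.lt_sqrt (by linarith)).mpr
          rw [hXdef]; nlinarith [hγpos]
        linarith
      · rw [hMdef]
        have hX : X = ((N:ℝ)-2)^2 + 4*γ := hXdef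
        nlinarith [hs2, hX]
    have hB1 : ∀ z ∈ Ioo (-1:ℝ) 1, HasDerivAt (Bfun β M) (Bfun' β M z) z :=
      fun z hz => hasDerivAt_Bfun hβ hM0 hz
    have hB2 : ∀ z ∈ Ioo (-1:ℝ) 1, HasDerivAt (Bfun' β M)
        ((N:ℝ) * z / (1 - z^2) * Bfun' β M z + γ / (1 - z^2)^2 * Bfun β M z) z := by
      intro z hz
      have h := hasDerivAt_Bfun' hβ hM hz
      rw [hNM, ← hγeq]
      exact h
    refine ⟨Bfun β M, Bfun' β M, hB1, hB2, Bfun_zero, Bfun'_zero, ?_, ?_⟩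
    · intro C C' hC1 hC2 hC0 hC0'
      exact HeunIVP.uniq N γ hγ _ _ C C' hB1 hB2 hC1 hC2
        (by rw [hC0, Bfun_zero]) (by rw [hC0', Bfun'_zero])
    · intro _ z hz
      exact ⟨Bfun_pos hβ hM0 hz, Bfun'_pos hβ hM hz⟩
end

section
/- Fix N ≥ 2 and γ > N-1, and let f : [0, π/2) → ℝ be the solution of the Riccati initial value problem f'(λ) = -f(λ)² + (N-1) tan λ · f(λ) + γ/cos²λ, f(0) = 0. Let c := (N-2+√((N-2)²+4γ))/2. Then c > N-1 and f(λ) ≥ c · tan λ for all λ ∈ [0, π/2). -/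
set_option maxHeartbeats 1000000


open Real Set Filter Topology

/-- For `N ≥ 2`, `γ > N-1` and `f` the solution of the Riccati IVP
`f' = -f² + (N-1) tan λ · f + γ/cos²λ`, `f(0) = 0`, with
`c = (N-2+√((N-2)²+4γ))/2` one has `c > N-1` and `f(λ) ≥ c tan λ` on `[0, π/2)`. -/
theorem riccati_lower_bound (N : ℕ) (hN : 2 ≤ N) (γ : ℝ) (hγ : (N:ℝ) - 1 < γ)
    (f : ℝ → ℝ) (hf0 : f 0 = 0) (hfc : ContinuousOn f (Ico 0 (π/2)))
    (hf : ∀ lam ∈ Ioo (0:ℝ) (π/2),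
      HasDerivAt f (-(f lam)^2 + ((N:ℝ) - 1) * Real.tan lam * f lam
        + γ / (Real.cos lam)^2) lam) :
    ((N:ℝ) - 1 < ((N:ℝ) - 2 + Real.sqrt (((N:ℝ) - 2)^2 + 4*γ)) / 2) ∧
    ∀ lam ∈ Ico (0:ℝ) (π/2),
      (((N:ℝ) - 2 + Real.sqrt (((N:ℝ) - 2)^2 + 4*γ)) / 2) * Real.tan lam ≤ f lam := by
  have hN2 : (2:ℝ) ≤ (N:ℝ) := by exact_mod_cast hN
  set s := Real.sqrt (((N:ℝ)-2)^2 + 4*γ) with hs_def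
  have harg : (0:ℝ) ≤ ((N:ℝ)-2)^2 + 4*γ := by nlinarith
  have hs : s^2 = ((N:ℝ)-2)^2 + 4*γ := Real.sq_sqrt harg
  have hsnn : 0 ≤ s := Real.sqrt_nonneg _
  set c := (((N:ℝ)-2) + s)/2 with hc_def
  have hcN : (N:ℝ) - 1 < c := by nlinarith [hs, hsnn]
  have hc2 : c^2 = ((N:ℝ)-2)*c + γ := by
    rw [hc_def]; nlinarith [hs]
  have hγc : c < γ := by nlinarith
  refine ⟨hcN, ?_⟩
  intro lam hlam
  rcases eq_or_lt_of_le hlam.1 with h0 | h0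
  · simp [← h0, hf0]
  have hlam2 := hlam.2
  have hcos : ∀ x : ℝ, 0 ≤ x → x < π/2 → 0 < Real.cos x := fun x hx1 hx2 =>
    Real.cos_pos_of_mem_Ioo ⟨by linarith [Real.pi_pos], hx2⟩
  have htanc : ContinuousOn Real.tan (Ico 0 (π/2)) := fun x hx =>
    (Real.continuousAt_tan.2 (ne_of_gt (hcos x hx.1 hx.2))).continuousWithinAt
  have key : ∀ ε > (0:ℝ), c * Real.tan lam ≤ f lam + ε := by
    intro ε hε
    set ε' := min ε (Real.sqrt (γ - c) / 2) with hε'_def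
    have hε'pos : 0 < ε' := lt_min hε (div_pos (Real.sqrt_pos.2 (by linarith)) two_pos)
    have hε'le : ε' ≤ ε := min_le_left _ _
    have hε'sq : ε'^2 < γ - c := by
      have h1 : ε' ≤ Real.sqrt (γ - c) / 2 := min_le_right _ _
      have h2 : (Real.sqrt (γ - c))^2 = γ - c := Real.sq_sqrt (by linarith)
      nlinarith [Real.sqrt_nonneg (γ - c), hε'pos]
    -- choose a small point a where c tan a - f a < ε'
    have hsub : Ioo (0:ℝ) lam ⊆ Ico 0 (π/2) := fun t ht => ⟨ht.1.le, ht.2.trans hlam2⟩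
    have hFc : ContinuousWithinAt (fun t => c * Real.tan t - f t) (Ico 0 (π/2)) 0 :=
      ((continuousWithinAt_const.mul (htanc 0 ⟨le_rfl, by linarith [Real.pi_pos]⟩)).sub
        (hfc 0 ⟨le_rfl, by linarith [Real.pi_pos]⟩))
    have hF0 : c * Real.tan 0 - f 0 = 0 := by simp [hf0]
    have htend : Tendsto (fun t => c * Real.tan t - f t) (𝓝[Ioo 0 lam] 0) (𝓝 0) := by
      have := hFc.tendsto
      rw [hF0] at this
      exact this.mono_left (nhdsWithin_mono _ hsub)
    haveI : (𝓝[Ioo (0:ℝ) lam] 0).NeBot := by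
      rw [← mem_closure_iff_nhdsWithin_neBot, closure_Ioo h0.ne]
      exact ⟨le_rfl, h0.le⟩
    have hev : ∀ᶠ t in 𝓝[Ioo (0:ℝ) lam] 0, c * Real.tan t - f t < ε' :=
      htend.eventually_lt_const hε'pos
    obtain ⟨a, haF, ha_mem⟩ := (hev.and eventually_mem_nhdsWithin).exists
    have ha0 : 0 < a := ha_mem.1
    have halam : a < lam := ha_mem.2
    -- comparison on [a, lam]
    have hIccsub : Icc a lam ⊆ Ico 0 (π/2) := fun t ht =>
      ⟨le_trans ha0.le ht.1, lt_of_le_of_lt ht.2 hlam2⟩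
    have hIcosub : Ico a lam ⊆ Ioo 0 (π/2) := fun t ht =>
      ⟨lt_of_lt_of_le ha0 ht.1, lt_trans ht.2 hlam2⟩
    have main : ∀ ⦃x⦄, x ∈ Icc a lam → (fun t => c * Real.tan t - ε') x ≤ f x := by
      refine image_le_of_deriv_right_lt_deriv_boundary'
        (f' := fun t => c * (1 / Real.cos t ^ 2))
        (B' := fun x => -(f x)^2 + ((N:ℝ) - 1) * Real.tan x * f x + γ / (Real.cos x)^2)
        ?_ ?_ ?_ (hfc.mono hIccsub) ?_ ?_
      · exact ((continuousOn_const.mul (htanc.mono hIccsub)).sub continuousOn_const)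
      · intro x hx
        have hcx : Real.cos x ≠ 0 :=
          ne_of_gt (hcos x (le_trans ha0.le hx.1) (lt_trans hx.2 hlam2))
        exact (((Real.hasDerivAt_tan hcx).const_mul c).sub_const ε').hasDerivWithinAt
      · linarith
      · intro x hx
        exact (hf x (hIcosub hx)).hasDerivWithinAt
      · intro x hx heq
        have hx0 : 0 < x := lt_of_lt_of_le ha0 hx.1
        have hx2 : x < π/2 := lt_trans hx.2 hlam2
        have hcx : 0 < Real.cos x := hcos x hx0.le hx2
        have hcx' : Real.cos x ≠ 0 := ne_of_gt hcx
        have hT : Real.tan x ^ 2 + 1 = 1 / Real.cos x ^ 2 := by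
          rw [Real.tan_eq_sin_div_cos]
          field_simp
          exact Real.sin_sq_add_cos_sq x
        have hγdiv : γ / Real.cos x ^ 2 = γ * (Real.tan x ^ 2 + 1) := by
          rw [hT, mul_one_div]
        have hTnn : 0 ≤ Real.tan x :=
          Real.tan_nonneg_of_nonneg_of_le_pi_div_two hx0.le hx2.le
        beta_reduce
        rw [← heq, hγdiv, ← hT]
        nlinarith [mul_nonneg hTnn hε'pos.le, hε'sq, hcN, hN2, hc2, hε'pos]
    have := main (right_mem_Icc.2 halam.le)
    simp only at this
    linarith
  by_contra hcon
  push_neg at hcon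
  obtain ⟨ε, hε1, hε2⟩ : ∃ ε > (0:ℝ), f lam + ε < c * Real.tan lam :=
    ⟨(c * Real.tan lam - f lam)/2, by linarith, by linarith⟩
  linarith [key ε hε1]
end

section
/- Fix N ≥ 2 and γ > N-1, and let f : [0, π/2) → ℝ solve f'(λ) = -f(λ)² + (N-1) tan λ · f(λ) + γ/cos²λ with f(0)=0. Then f(λ) ≤ N √γ / cos λ for all λ ∈ [0, π/2). -/
open Real Set Filter Topology

/-! The barrier `B λ = N √γ / cos λ` lies strictly above `f` at `λ = 0`, and wherever `f` touches
it the Riccati equation gives `(f - B)' = (-N²γ + (N - 2) N √γ sin λ + γ) / cos² λ`, which is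
negative because `√γ ≤ γ` for `γ ≥ 1`. Hence `f` can never cross `B`. -/

theorem image_le_of_lt_of_deriv_right_lt_deriv_boundary {f f' B B' : ℝ → ℝ} {a b : ℝ}
    (hf : ContinuousOn f (Icc a b)) (hf' : ∀ x ∈ Ioo a b, HasDerivWithinAt f (f' x) (Ici x) x)
    (ha : f a < B a) (hB : ContinuousOn B (Icc a b))
    (hB' : ∀ x ∈ Ioo a b, HasDerivWithinAt B (B' x) (Ici x) x)
    (bound : ∀ x ∈ Ioo a b, f x = B x → f' x < B' x) : ∀ ⦃x⦄, x ∈ Icc a b → f x ≤ B x := by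
  intro x hx
  rcases hx.1.eq_or_lt with rfl | hax
  · exact ha.le
  have hab : a < b := hax.trans_le hx.2
  have hcont {g : ℝ → ℝ} (hg : ContinuousOn g (Icc a b)) : Tendsto g (𝓝[>] a) (𝓝 (g a)) := by
    rw [← nhdsWithin_Ioo_eq_nhdsGT hab]
    exact (hg a ⟨le_rfl, hab.le⟩).mono Ioo_subset_Icc_self
  obtain ⟨ε, hfε, hε⟩ :=
    (((hcont hf).eventually_lt (hcont hB) ha).and (Ioo_mem_nhdsGT hax)).exists
  have hsub : Icc ε x ⊆ Icc a b := Icc_subset_Icc hε.1.le hx.2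
  have hsub' : Ico ε x ⊆ Ioo a b := fun y hy => ⟨hε.1.trans_le hy.1, hy.2.trans_le hx.2⟩
  exact image_le_of_deriv_right_lt_deriv_boundary' (hf.mono hsub)
    (fun y hy => hf' y (hsub' hy)) hfε.le (hB.mono hsub) (fun y hy => hB' y (hsub' hy))
    (fun y hy => bound y (hsub' hy)) ⟨hε.2.le, le_rfl⟩

theorem hasDerivAt_const_div_cos (c : ℝ) {x : ℝ} (hx : cos x ≠ 0) :
    HasDerivAt (fun y => c / cos y) (c * sin x / cos x ^ 2) x := by
  have := (hasDerivAt_const x c).div (hasDerivAt_cos x) hx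
  simp only [zero_mul, zero_sub, mul_neg, neg_neg] at this
  exact this

theorem neg_sq_add_mul_add_lt_zero {n γ s : ℝ} (hn : 2 ≤ n) (hγ : 1 < γ) (hs : s ≤ 1) :
    -(n * √γ) ^ 2 + (n - 2) * (n * √γ) * s + γ < 0 := by
  have hsqrt : √γ ≤ γ := by
    rw [sqrt_le_left (by linarith)]; nlinarith
  have h0 : 0 ≤ (n - 2) * (n * √γ) := mul_nonneg (by linarith) (by positivity)
  have h1 : (n - 2) * (n * √γ) * s ≤ (n - 2) * (n * √γ) := mul_le_of_le_one_right h0 hs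
  have h2 : (n - 2) * (n * √γ) ≤ (n - 2) * (n * γ) := by gcongr
  calc -(n * √γ) ^ 2 + (n - 2) * (n * √γ) * s + γ
      ≤ -(n ^ 2 * γ) + (n - 2) * (n * γ) + γ := by
        rw [mul_pow, sq_sqrt (by linarith)]; linarith
    _ = (1 - 2 * n) * γ := by ring
    _ < 0 := mul_neg_of_neg_of_pos (by linarith) (by linarith)

theorem riccati_field_lt_deriv_barrier {n γ x : ℝ} (hn : 2 ≤ n) (hγ : 1 < γ) (hx : 0 < cos x) :
    -(n * √γ / cos x) ^ 2 + (n - 1) * tan x * (n * √γ / cos x) + γ / cos x ^ 2 <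
      n * √γ * sin x / cos x ^ 2 := by
  have key := neg_sq_add_mul_add_lt_zero hn hγ (sin_le_one x)
  have hdiff : -(n * √γ / cos x) ^ 2 + (n - 1) * tan x * (n * √γ / cos x) + γ / cos x ^ 2 -
      n * √γ * sin x / cos x ^ 2 =
      (-(n * √γ) ^ 2 + (n - 2) * (n * √γ) * sin x + γ) / cos x ^ 2 := by
    rw [tan_eq_sin_div_cos]
    field_simp
    ring
  exact sub_neg.mp (hdiff ▸ div_neg_of_neg_of_pos key (pow_pos hx 2))

/-- For `N ≥ 2`, `γ > N-1` and `f` the Riccati solution with `f(0)=0`,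
one has `f(λ) ≤ N √γ / cos λ` on `[0, π/2)`. -/
theorem riccati_upper_bound (N : ℕ) (hN : 2 ≤ N) (γ : ℝ) (hγ : (N:ℝ) - 1 < γ)
    (f : ℝ → ℝ) (hf0 : f 0 = 0) (hfc : ContinuousOn f (Ico 0 (π/2)))
    (hf : ∀ lam ∈ Ioo (0:ℝ) (π/2),
      HasDerivAt f (-(f lam)^2 + ((N:ℝ) - 1) * Real.tan lam * f lam
        + γ / (Real.cos lam)^2) lam) :
    ∀ lam ∈ Ico (0:ℝ) (π/2), f lam ≤ (N:ℝ) * Real.sqrt γ / Real.cos lam := by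
  have hN2 : (2:ℝ) ≤ N := by exact_mod_cast hN
  have hγ1 : 1 < γ := by linarith
  intro lam hlam
  have hsub : Icc 0 lam ⊆ Ico 0 (π / 2) := Icc_subset_Ico_right hlam.2
  have hsub' : Ioo 0 lam ⊆ Ioo 0 (π / 2) := Ioo_subset_Ioo_right hlam.2.le
  have hcos : ∀ x ∈ Icc 0 lam, 0 < cos x := fun x hx =>
    cos_pos_of_mem_Ioo ⟨by linarith [hx.1, pi_pos], (hsub hx).2⟩
  have hcos' : ∀ x ∈ Ioo 0 lam, 0 < cos x := fun x hx => hcos x (Ioo_subset_Icc_self hx)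
  refine image_le_of_lt_of_deriv_right_lt_deriv_boundary (B := fun x => N * √γ / cos x)
    (hfc.mono hsub)
    (fun x hx => (hf x (hsub' hx)).hasDerivWithinAt) ?_
    (continuousOn_const.div continuous_cos.continuousOn fun x hx => (hcos x hx).ne')
    (fun x hx => (hasDerivAt_const_div_cos _ (hcos' x hx).ne').hasDerivWithinAt)
    ?_ ⟨hlam.1, le_rfl⟩
  · rw [hf0, cos_zero, div_one]
    positivity
  · intro x hx hfx
    rw [hfx]
    exact riccati_field_lt_deriv_barrier hN2 hγ1 (hcos' x hx)
end

section
/- Fix N ≥ 2 and j ≥ 2; set γ_j = j(N-2+j). Let ũ be the even solution of d/dθ( cos^{N-1}θ ũ'(θ) ) = -cos^{N-1}θ with ũ'(0)=0, and let f_j solve the Riccati IVP f' = -f² + (N-1) tan λ · f + γ_j/cos²λ, f(0)=0. Define σ_j(λ) := ũ'(λ)·((N-1) tan λ - f_j(λ)) - 1. Then σ_j(λ) → ∞ as λ → (π/2)⁻. -/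
open Real Set Filter Topology

/-!
Since `(cos^{N-1} ũ')' = -cos^{N-1}` and `cos` decreases on `[0, π/2)`, integrating from `0`
gives `ũ'(λ) ≤ -λ`. For the Riccati solution, `N tan` is a strict subsolution of the same
equation with the same initial value, so `f_j ≥ N tan`. Hence
`σ_j(λ) = (-ũ'(λ)) (f_j(λ) - (N-1) tan λ) - 1 ≥ λ tan λ - 1 → ∞`.
-/

theorem le_neg_of_hasDerivAt_cos_pow_mul {k : ℕ} {v : ℝ → ℝ} {lam : ℝ}
    (hlam : lam ∈ Ico 0 (π / 2)) (hv0 : v 0 = 0)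
    (hv : ∀ θ ∈ Icc 0 lam, HasDerivAt (fun s => cos s ^ k * v s) (-(cos θ ^ k)) θ) :
    v lam ≤ -lam := by
  have hcos : 0 < cos lam := cos_pos_of_mem_Ioo ⟨by linarith [hlam.1, pi_pos], hlam.2⟩
  have key : cos lam ^ k * v lam ≤ -lam * cos lam ^ k := by
    refine image_le_of_deriv_right_le_deriv_boundary (f := fun s => cos s ^ k * v s)
      (B := fun s => -s * cos lam ^ k)
      (fun x hx => (hv x hx).continuousAt.continuousWithinAt)
      (fun x hx => (hv x (Ico_subset_Icc_self hx)).hasDerivWithinAt) (by simp [hv0])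
      (by fun_prop) (fun x _ => ((hasDerivAt_id x).neg.mul_const _).hasDerivWithinAt) ?_
      ⟨hlam.1, le_rfl⟩
    intro x hx
    have : cos lam ≤ cos x :=
      cos_le_cos_of_nonneg_of_le_pi hx.1 (by linarith [hlam.2, pi_pos]) hx.2.le
    simp only [neg_mul, one_mul, neg_le_neg_iff]
    gcongr
  nlinarith [pow_pos hcos k]

noncomputable def riccatiRHS (n γ x y : ℝ) : ℝ := -y ^ 2 + n * tan x * y + γ / cos x ^ 2

section Riccati

variable {n γ : ℝ} {f : ℝ → ℝ}

theorem mul_one_div_cos_sq_lt_riccatiRHS_mul_tan {c x : ℝ} (hcγ : c ^ 2 - (n - 1) * c ≤ γ)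
    (hc : c < γ) (hx : cos x ≠ 0) :
    c * (1 / cos x ^ 2) < riccatiRHS n γ x (c * tan x) := by
  have hsec : 1 / cos x ^ 2 = 1 + tan x ^ 2 := by
    rw [← inv_one_add_tan_sq hx, one_div, inv_inv]
  have key : riccatiRHS n γ x (c * tan x) - c * (1 / cos x ^ 2)
      = (γ - c ^ 2 + (n - 1) * c) * tan x ^ 2 + (γ - c) := by
    rw [riccatiRHS, div_eq_mul_one_div γ, hsec]
    ring
  nlinarith [sq_nonneg (tan x)]

theorem hasDerivWithinAt_Ici_of_riccati (hfc : ContinuousOn f (Ico 0 (π / 2)))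
    (hf : ∀ x ∈ Ioo 0 (π / 2), HasDerivAt f (riccatiRHS n γ x (f x)) x) {x : ℝ}
    (hx : x ∈ Ico 0 (π / 2)) :
    HasDerivWithinAt f (riccatiRHS n γ x (f x)) (Ici x) x := by
  rcases hx.1.eq_or_lt with rfl | hx0
  · have hcont : ContinuousWithinAt (fun y => riccatiRHS n γ y (f y)) (Ioo 0 (π / 2)) 0 := by
      have hf0 := (hfc 0 hx).mono Ioo_subset_Ico_self
      have htan : ContinuousAt tan 0 := continuousAt_tan.2 (by simp)
      exact ((hf0.pow 2).neg.add ((htan.continuousWithinAt.const_mul n).mul hf0)).add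
        (continuousWithinAt_const.div (continuous_cos.continuousWithinAt.pow 2) (by simp))
    have hderiv : deriv f =ᶠ[𝓝[>] 0] fun y => riccatiRHS n γ y (f y) := by
      filter_upwards [Ioo_mem_nhdsGT pi_div_two_pos] with y hy using (hf y hy).deriv
    refine hasDerivWithinAt_Ici_of_tendsto_deriv
      (fun y hy => (hf y hy).differentiableAt.differentiableWithinAt)
      ((hfc 0 hx).mono Ioo_subset_Ico_self) (Ioo_mem_nhdsGT pi_div_two_pos) ?_
    rw [← nhdsWithin_Ioo_eq_nhdsGT pi_div_two_pos] at hderiv ⊢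
    exact hcont.tendsto.congr' hderiv.symm
  · exact (hf x ⟨hx0, hx.2⟩).hasDerivWithinAt

theorem mul_tan_le_of_riccati {c : ℝ} (hcγ : c ^ 2 - (n - 1) * c ≤ γ) (hc : c < γ)
    (hf0 : f 0 = 0) (hfc : ContinuousOn f (Ico 0 (π / 2)))
    (hf : ∀ x ∈ Ioo 0 (π / 2), HasDerivAt f (riccatiRHS n γ x (f x)) x) {x : ℝ}
    (hx : x ∈ Ico 0 (π / 2)) :
    c * tan x ≤ f x := by
  have hsub : Icc 0 x ⊆ Ico 0 (π / 2) := Icc_subset_Ico_right hx.2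
  have hcos : ∀ y ∈ Icc 0 x, cos y ≠ 0 := fun y hy =>
    (cos_pos_of_mem_Ioo ⟨by linarith [hy.1, pi_pos], (hsub hy).2⟩).ne'
  have htan : ∀ y ∈ Icc 0 x, HasDerivAt (fun y => c * tan y) (c * (1 / cos y ^ 2)) y :=
    fun y hy => (hasDerivAt_tan (hcos y hy)).const_mul c
  refine image_le_of_deriv_right_lt_deriv_boundary' (B := f)
    (fun y hy => (htan y hy).continuousAt.continuousWithinAt)
    (fun y hy => (htan y (Ico_subset_Icc_self hy)).hasDerivWithinAt) (by simp [hf0])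
    (hfc.mono hsub)
    (fun y hy => hasDerivWithinAt_Ici_of_riccati hfc hf (hsub (Ico_subset_Icc_self hy)))
    (fun y hy hyf => ?_) ⟨hx.1, le_rfl⟩
  rw [← hyf]
  exact mul_one_div_cos_sq_lt_riccatiRHS_mul_tan hcγ hc (hcos y (Ico_subset_Icc_self hy))

end Riccati

theorem sigma_tendsto_atTop_general (N j : ℕ) (hN : 2 ≤ N) (hj : 2 ≤ j) (u' f : ℝ → ℝ)
    (hu0 : u' 0 = 0)
    (hode : ∀ θ ∈ Ioo (-(π/2)) (π/2),
      HasDerivAt (fun s => Real.cos s ^ (N - 1) * u' s) (-(Real.cos θ ^ (N - 1))) θ)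
    (hf0 : f 0 = 0) (hfc : ContinuousOn f (Ico 0 (π/2)))
    (hf : ∀ lam ∈ Ioo (0:ℝ) (π/2),
      HasDerivAt f (-(f lam)^2 + ((N:ℝ) - 1) * Real.tan lam * f lam
        + ((j:ℝ) * ((N:ℝ) - 2 + (j:ℝ))) / (Real.cos lam)^2) lam) :
    Tendsto (fun lam => u' lam * (((N:ℝ) - 1) * Real.tan lam - f lam) - 1)
      (𝓝[<] (π/2)) atTop := by
  have hu' : ∀ lam ∈ Ico 0 (π / 2), u' lam ≤ -lam := fun lam hlam =>
    le_neg_of_hasDerivAt_cos_pow_mul hlam hu0 fun θ hθ =>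
      hode θ ⟨by linarith [hθ.1, pi_pos], hθ.2.trans_lt hlam.2⟩
  have hN' : (2 : ℝ) ≤ N := by exact_mod_cast hN
  have hj' : (2 : ℝ) ≤ j := by exact_mod_cast hj
  have hf' : ∀ lam ∈ Ico 0 (π / 2), N * tan lam ≤ f lam := fun lam hlam =>
    mul_tan_le_of_riccati (n := (N : ℝ) - 1) (by nlinarith) (by nlinarith) hf0 hfc hf hlam
  have hlower : ∀ᶠ lam in 𝓝[<] (π / 2),
      lam * tan lam + -1 ≤ u' lam * (((N : ℝ) - 1) * tan lam - f lam) - 1 := by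
    filter_upwards [Ioo_mem_nhdsLT pi_div_two_pos] with lam hlam
    have htan : 0 ≤ tan lam := tan_nonneg_of_nonneg_of_le_pi_div_two hlam.1.le hlam.2.le
    have hu'lam := hu' lam ⟨hlam.1.le, hlam.2⟩
    have hflam := hf' lam ⟨hlam.1.le, hlam.2⟩
    have := mul_le_mul (le_neg.mpr hu'lam)
      (show tan lam ≤ f lam - (N - 1) * tan lam by linarith) htan (by linarith [hlam.1])
    linarith
  refine tendsto_atTop_mono' _ hlower (tendsto_atTop_add_const_right _ (-1) ?_)
  exact (tendsto_id.mono_left nhdsWithin_le_nhds).pos_mul_atTop pi_div_two_pos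
    tendsto_tan_pi_div_two

/-- For `N ≥ 2`, `j ≥ 2`, `γⱼ = j(N-2+j)`, with `ũ` the torsion solution
and `fⱼ` the Riccati solution, the eigenvalue `σⱼ(λ) = ũ'(λ)((N-1)tan λ - fⱼ(λ)) - 1`
tends to `+∞` as `λ → (π/2)⁻`. -/
theorem sigma_tendsto_atTop (N j : ℕ) (hN : 2 ≤ N) (hj : 2 ≤ j) (u u' f : ℝ → ℝ)
    (hu0 : u' 0 = 0)
    (hu : ∀ θ ∈ Ioo (-(π/2)) (π/2), HasDerivAt u (u' θ) θ)
    (hode : ∀ θ ∈ Ioo (-(π/2)) (π/2),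
      HasDerivAt (fun s => Real.cos s ^ (N - 1) * u' s) (-(Real.cos θ ^ (N - 1))) θ)
    (hf0 : f 0 = 0) (hfc : ContinuousOn f (Ico 0 (π/2)))
    (hf : ∀ lam ∈ Ioo (0:ℝ) (π/2),
      HasDerivAt f (-(f lam)^2 + ((N:ℝ) - 1) * Real.tan lam * f lam
        + ((j:ℝ) * ((N:ℝ) - 2 + (j:ℝ))) / (Real.cos lam)^2) lam) :
    Tendsto (fun lam => u' lam * (((N:ℝ) - 1) * Real.tan lam - f lam) - 1)
      (𝓝[<] (π/2)) atTop :=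
  sigma_tendsto_atTop_general N j hN hj u' f hu0 hode hf0 hfc hf
end

section
/- Fix N ≥ 2 and j ≥ 2 with γ_j = j(N-2+j), and let σ_j(λ) = ũ'(λ)·((N-1) tan λ - f_j(λ)) - 1 as above. If λ* ∈ (0, π/2) satisfies σ_j(λ*) = 0, then σ_j'(λ*) = ũ'(λ*)·(N-1-γ_j)/cos²λ* > 0. -/
open Real Set Filter Topology

/-! The torsion equation `(cos^(N-1) ũ')' = -cos^(N-1)` makes `cos^(N-1) ũ'` strictly decreasing
from its value `0` at the pole, so `ũ' < 0` on `(0, π/2)`, and in its expanded form it gives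
`ũ'' = -1 + (N-1) tan λ · ũ'`. Differentiating `σⱼ` and substituting both this and the Riccati
equation for `fⱼ`, everything except `ũ' (N-1-γⱼ)/cos²` collapses to `((N-1) tan - fⱼ) · σⱼ`,
which vanishes at `λ*`. The sign then comes from `ũ' < 0` and `γⱼ > N-1` for `j ≥ 2`. -/

section SphericalTorsion

variable {k : ℕ} {v : ℝ → ℝ}

lemma neg_of_hasDerivAt_cos_pow_mul (hv0 : v 0 = 0)
    (hode : ∀ θ ∈ Ioo (-(π / 2)) (π / 2),
      HasDerivAt (fun s => cos s ^ k * v s) (-(cos θ ^ k)) θ)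
    {l : ℝ} (hl : l ∈ Ioo 0 (π / 2)) : v l < 0 := by
  have hl' : l ∈ Ioo (-(π / 2)) (π / 2) := ⟨by linarith [hl.1, pi_pos], hl.2⟩
  have hanti : StrictAntiOn (fun s => cos s ^ k * v s) (Ioo (-(π / 2)) (π / 2)) := by
    refine strictAntiOn_of_deriv_neg (convex_Ioo _ _)
      (fun θ hθ => (hode θ hθ).continuousAt.continuousWithinAt) fun θ hθ => ?_
    rw [interior_Ioo] at hθ
    rw [(hode θ hθ).deriv, neg_lt_zero]
    exact pow_pos (cos_pos_of_mem_Ioo hθ) k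
  have hlt : cos l ^ k * v l < 0 := by
    simpa [hv0] using hanti ⟨by linarith [pi_pos], by linarith [pi_pos]⟩ hl' hl.1
  exact neg_of_mul_neg_right hlt (pow_pos (cos_pos_of_mem_Ioo hl') k).le

lemma second_deriv_eq_of_hasDerivAt_cos_pow_mul {v'' θ : ℝ} (hcos : cos θ ≠ 0)
    (hv : HasDerivAt v v'' θ)
    (hode : HasDerivAt (fun s => cos s ^ k * v s) (-(cos θ ^ k)) θ) :
    v'' = -1 + k * tan θ * v θ := by
  have heq := (((hasDerivAt_cos θ).fun_pow k).mul hv).unique hode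
  rw [tan_eq_sin_div_cos]
  rcases k with _ | k
  · simpa using heq
  · simp only [Nat.add_sub_cancel, Nat.cast_add, Nat.cast_one] at heq
    have h : cos θ * (v'' + 1) = (k + 1) * sin θ * v θ :=
      mul_left_cancel₀ (pow_ne_zero k hcos) (by linear_combination heq)
    field_simp
    push_cast
    linear_combination h

end SphericalTorsion

lemma hasDerivAt_sigma_of_eq_zero {v f : ℝ → ℝ} {v'' a γ θ : ℝ} (hcos : cos θ ≠ 0)
    (hv : HasDerivAt v v'' θ) (hv'' : v'' = -1 + a * tan θ * v θ)
    (hf : HasDerivAt f (-(f θ) ^ 2 + a * tan θ * f θ + γ / cos θ ^ 2) θ)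
    (hzero : v θ * (a * tan θ - f θ) - 1 = 0) :
    HasDerivAt (fun s => v s * (a * tan s - f s) - 1) (v θ * (a - γ) / cos θ ^ 2) θ := by
  refine ((hv.mul (((hasDerivAt_tan hcos).const_mul a).fun_sub hf)).sub_const 1).congr_deriv ?_
  rw [hv'']
  linear_combination (a * tan θ - f θ) * hzero

lemma sub_one_lt_mul_sub_two_add (N : ℕ) {j : ℝ} (hj : 2 ≤ j) :
    (N : ℝ) - 1 < j * (N - 2 + j) := by
  nlinarith [Nat.cast_nonneg (α := ℝ) N]

theorem sigma_transversality_general (N j : ℕ) (hN : 2 ≤ N) (hj : 2 ≤ j)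
    (u' u'' f : ℝ → ℝ) (l0 : ℝ) (hl0 : l0 ∈ Ioo (0:ℝ) (π/2))
    (hu0 : u' 0 = 0)
    (hu' : ∀ θ ∈ Ioo (-(π/2)) (π/2), HasDerivAt u' (u'' θ) θ)
    (hode : ∀ θ ∈ Ioo (-(π/2)) (π/2),
      HasDerivAt (fun s => Real.cos s ^ (N - 1) * u' s) (-(Real.cos θ ^ (N - 1))) θ)
    (hf : ∀ lam ∈ Ioo (0:ℝ) (π/2),
      HasDerivAt f (-(f lam)^2 + ((N:ℝ) - 1) * Real.tan lam * f lam
        + ((j:ℝ) * ((N:ℝ) - 2 + (j:ℝ))) / (Real.cos lam)^2) lam)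
    (hzero : u' l0 * (((N:ℝ) - 1) * Real.tan l0 - f l0) - 1 = 0) :
    HasDerivAt (fun s => u' s * (((N:ℝ) - 1) * Real.tan s - f s) - 1)
      (u' l0 * (((N:ℝ) - 1) - (j:ℝ) * ((N:ℝ) - 2 + (j:ℝ))) / (Real.cos l0)^2) l0 ∧
    0 < u' l0 * (((N:ℝ) - 1) - (j:ℝ) * ((N:ℝ) - 2 + (j:ℝ))) / (Real.cos l0)^2 := by
  have hl0' : l0 ∈ Ioo (-(π / 2)) (π / 2) := ⟨by linarith [hl0.1, pi_pos], hl0.2⟩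
  have hcos : 0 < cos l0 := cos_pos_of_mem_Ioo hl0'
  have hu'_neg : u' l0 < 0 := neg_of_hasDerivAt_cos_pow_mul hu0 hode hl0
  have hu'' : u'' l0 = -1 + ((N : ℝ) - 1) * tan l0 * u' l0 := by
    rw [second_deriv_eq_of_hasDerivAt_cos_pow_mul hcos.ne' (hu' l0 hl0') (hode l0 hl0'),
      Nat.cast_pred (by omega)]
  refine ⟨hasDerivAt_sigma_of_eq_zero hcos.ne' (hu' l0 hl0') hu'' (hf l0 hl0) hzero, ?_⟩
  have hγ := sub_one_lt_mul_sub_two_add N (j := j) (by exact_mod_cast hj)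
  exact div_pos (mul_pos_of_neg_of_neg hu'_neg (sub_neg.2 hγ)) (pow_pos hcos 2)

/-- Transversality: if `σⱼ(λ*) = 0` for some `λ* ∈ (0, π/2)` then
`σⱼ'(λ*) = ũ'(λ*)(N-1-γⱼ)/cos²λ* > 0`, where `γⱼ = j(N-2+j)`, `j ≥ 2`. -/
theorem sigma_transversality (N j : ℕ) (hN : 2 ≤ N) (hj : 2 ≤ j)
    (u u' u'' f : ℝ → ℝ) (l0 : ℝ) (hl0 : l0 ∈ Ioo (0:ℝ) (π/2))
    (hu0 : u' 0 = 0)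
    (hu : ∀ θ ∈ Ioo (-(π/2)) (π/2), HasDerivAt u (u' θ) θ)
    (hu' : ∀ θ ∈ Ioo (-(π/2)) (π/2), HasDerivAt u' (u'' θ) θ)
    (hode : ∀ θ ∈ Ioo (-(π/2)) (π/2),
      HasDerivAt (fun s => Real.cos s ^ (N - 1) * u' s) (-(Real.cos θ ^ (N - 1))) θ)
    (hf0 : f 0 = 0)
    (hf : ∀ lam ∈ Ioo (0:ℝ) (π/2),
      HasDerivAt f (-(f lam)^2 + ((N:ℝ) - 1) * Real.tan lam * f lam
        + ((j:ℝ) * ((N:ℝ) - 2 + (j:ℝ))) / (Real.cos lam)^2) lam)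
    (hzero : u' l0 * (((N:ℝ) - 1) * Real.tan l0 - f l0) - 1 = 0) :
    HasDerivAt (fun s => u' s * (((N:ℝ) - 1) * Real.tan s - f s) - 1)
      (u' l0 * (((N:ℝ) - 1) - (j:ℝ) * ((N:ℝ) - 2 + (j:ℝ))) / (Real.cos l0)^2) l0 ∧
    0 < u' l0 * (((N:ℝ) - 1) - (j:ℝ) * ((N:ℝ) - 2 + (j:ℝ))) / (Real.cos l0)^2 :=
  sigma_transversality_general N j hN hj u' u'' f l0 hl0 hu0 hu' hode hf hzero
end

section
/- Fix N ≥ 2 and j ≥ 2. With σ_j defined as above on (0, π/2), there exists a unique λ_j ∈ (0, π/2) with σ_j(λ_j) = 0. -/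
set_option maxHeartbeats 1600000

open Real Set Filter Topology MeasureTheory

/-- For `N ≥ 2` and `j ≥ 2` there is a unique `λⱼ ∈ (0, π/2)` with
`σⱼ(λⱼ) = 0`, where `σⱼ(λ) = ũ'(λ)((N-1)tan λ - fⱼ(λ)) - 1`. -/
theorem sigma_unique_zero (N j : ℕ) (hN : 2 ≤ N) (hj : 2 ≤ j)
    (u u' u'' f : ℝ → ℝ)
    (hu0 : u' 0 = 0)
    (hu : ∀ θ ∈ Ioo (-(π/2)) (π/2), HasDerivAt u (u' θ) θ)
    (hu' : ∀ θ ∈ Ioo (-(π/2)) (π/2), HasDerivAt u' (u'' θ) θ)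
    (hu'c : ContinuousOn u' (Ico 0 (π/2)))
    (hode : ∀ θ ∈ Ioo (-(π/2)) (π/2),
      HasDerivAt (fun s => Real.cos s ^ (N - 1) * u' s) (-(Real.cos θ ^ (N - 1))) θ)
    (hf0 : f 0 = 0) (hfc : ContinuousOn f (Ico 0 (π/2)))
    (hf : ∀ lam ∈ Ioo (0:ℝ) (π/2),
      HasDerivAt f (-(f lam)^2 + ((N:ℝ) - 1) * Real.tan lam * f lam
        + ((j:ℝ) * ((N:ℝ) - 2 + (j:ℝ))) / (Real.cos lam)^2) lam) :
    ∃! lam : ℝ, lam ∈ Ioo (0:ℝ) (π/2) ∧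
      u' lam * (((N:ℝ) - 1) * Real.tan lam - f lam) - 1 = 0 := by
  obtain ⟨n, rfl⟩ : ∃ n, N = n + 2 := ⟨N - 2, by omega⟩
  clear hu hN
  -- normalize casts
  push_cast at hf ⊢
  have e1 : ((n:ℝ) + 2 - 1) = (n:ℝ) + 1 := by ring
  have e2 : (j:ℝ) * ((n:ℝ) + 2 - 2 + (j:ℝ)) = (j:ℝ) * ((n:ℝ) + (j:ℝ)) := by ring
  simp only [e1, e2] at hf ⊢
  simp only [show n + 2 - 1 = n + 1 from rfl] at hode
  set jM : ℝ := (j:ℝ) * ((n:ℝ) + (j:ℝ)) with hjMdef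
  have hj2 : (2:ℝ) ≤ (j:ℝ) := by exact_mod_cast hj
  have hn0 : (0:ℝ) ≤ (n:ℝ) := Nat.cast_nonneg n
  have hjM : (n:ℝ) + 1 < jM := by nlinarith
  have hπ : (0:ℝ) < π/2 := pi_div_two_pos
  have hπ4 : (0:ℝ) < π/4 := by linarith [pi_pos]
  have hπ42 : π/4 < π/2 := by linarith [pi_pos]
  have hsub : Ioo (0:ℝ) (π/2) ⊆ Ioo (-(π/2)) (π/2) := fun x hx => ⟨by linarith [hx.1], hx.2⟩
  have hcos : ∀ x ∈ Ioo (0:ℝ) (π/2), 0 < cos x := fun x hx => cos_pos_of_mem_Ioo (hsub hx)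
  have hcosI : ∀ x ∈ Ico (0:ℝ) (π/2), 0 < cos x := fun x hx =>
    cos_pos_of_mem_Ioo ⟨lt_of_lt_of_le (by linarith) hx.1, hx.2⟩
  have htanc : ContinuousOn tan (Ico 0 (π/2)) :=
    Real.continuousOn_tan.mono (fun x hx => (hcosI x hx).ne')
  have hfo : ContinuousOn f (Ioo 0 (π/2)) := hfc.mono Ioo_subset_Ico_self
  -- FTC for cos power
  have hIcont : Continuous (fun t : ℝ => cos t ^ (n+1)) := continuous_cos.pow _
  have hIderiv : ∀ x : ℝ, HasDerivAt (fun t => ∫ s in (0:ℝ)..t, cos s ^ (n+1)) (cos x ^ (n+1)) x := by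
    intro x
    exact intervalIntegral.integral_hasDerivAt_right (hIcont.intervalIntegrable _ _)
      hIcont.stronglyMeasurable.stronglyMeasurableAtFilter hIcont.continuousAt
  have hIpos : ∀ x : ℝ, 0 < x → x < π/2 → 0 < ∫ s in (0:ℝ)..x, cos s ^ (n+1) := by
    intro x hx0 hx2
    refine intervalIntegral.intervalIntegral_pos_of_pos_on (hIcont.intervalIntegrable _ _) ?_ hx0
    intro s hs
    exact pow_pos (hcos s ⟨hs.1, hs.2.trans hx2⟩) _
  -- Step 1 : cos^(n+1) * u' = -∫₀^lam cos^(n+1)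
  have key1 : ∀ lam ∈ Ioo (0:ℝ) (π/2),
      cos lam ^ (n+1) * u' lam = -(∫ s in (0:ℝ)..lam, cos s ^ (n+1)) := by
    intro lam hlam
    obtain ⟨hl0, hl2⟩ := hlam
    have hIcc : Icc (0:ℝ) lam ⊆ Ico 0 (π/2) := fun x hx => ⟨hx.1, lt_of_le_of_lt hx.2 hl2⟩
    have hIccO : Ioo (0:ℝ) lam ⊆ Ioo 0 (π/2) := fun x hx => ⟨hx.1, hx.2.trans hl2⟩
    have hprimc : ContinuousOn (fun s => ∫ t in (0:ℝ)..s, cos t ^ (n+1)) (Icc 0 lam) := by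
      have := intervalIntegral.continuousOn_primitive_interval
        (f := fun t : ℝ => cos t ^ (n+1)) (a := 0) (b := lam) (μ := volume)
        (hIcont.continuousOn.integrableOn_Icc.mono_set (by rw [uIcc_of_le hl0.le]))
      rwa [uIcc_of_le hl0.le] at this
    obtain ⟨x, _, hx0⟩ := exists_hasDerivAt_eq_slope
      (fun s => cos s ^ (n+1) * u' s + ∫ t in (0:ℝ)..s, cos t ^ (n+1)) (fun _ => (0:ℝ)) hl0
      (((hIcont.continuousOn).mul (hu'c.mono hIcc)).add hprimc)
      (by
        intro x hx
        have h1 := hode x (hsub (hIccO hx))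
        have h2 := h1.add (hIderiv x)
        rw [neg_add_cancel] at h2
        exact h2)
    have h0 : cos (0:ℝ) ^ (n+1) * u' 0 + ∫ t in (0:ℝ)..(0:ℝ), cos t ^ (n+1) = 0 := by
      simp [hu0]
    have hx0' : (cos lam ^ (n+1) * u' lam + ∫ t in (0:ℝ)..lam, cos t ^ (n+1)) -
        (cos (0:ℝ) ^ (n+1) * u' 0 + ∫ t in (0:ℝ)..(0:ℝ), cos t ^ (n+1)) = 0 := by
      have h := hx0.symm
      rw [div_eq_zero_iff] at h
      rcases h with h | h
      · exact h
      · exfalso; linarith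
    linarith [h0, hx0']
  have hu'neg : ∀ lam ∈ Ioo (0:ℝ) (π/2), u' lam < 0 := by
    intro lam hlam
    have h1 := key1 lam hlam
    have h2 := hIpos lam hlam.1 hlam.2
    have h3 : 0 < cos lam ^ (n+1) := pow_pos (hcos lam hlam) _
    by_contra h
    push_neg at h
    have h4 := mul_nonneg h3.le h
    linarith
  have hu'leI : ∀ lam ∈ Ioo (0:ℝ) (π/2), (∫ s in (0:ℝ)..lam, cos s ^ (n+1)) ≤ -u' lam := by
    intro lam hlam
    have h1 := key1 lam hlam
    have h3 : 0 < cos lam ^ (n+1) := pow_pos (hcos lam hlam) _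
    have h4 : cos lam ^ (n+1) ≤ 1 :=
      pow_le_one₀ (cos_nonneg_of_mem_Icc ⟨by linarith [(hsub hlam).1], hlam.2.le⟩) (cos_le_one lam)
    have h5 := hu'neg lam hlam
    have h6 : 0 ≤ (1 - cos lam ^ (n+1)) * (-u' lam) := mul_nonneg (by linarith) (by linarith)
    linarith [h1, h6]
  -- Step 2 : u'' = -1 + (n+1) tan * u'
  have hu''eq : ∀ x ∈ Ioo (0:ℝ) (π/2), u'' x = -1 + ((n:ℝ)+1) * tan x * u' x := by
    intro x hx
    have hc := hcos x hx
    have h1 := hode x (hsub hx)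
    have h2 := ((Real.hasDerivAt_cos x).pow (n+1)).mul (hu' x (hsub hx))
    have h3 := h2.unique h1
    simp only [show n + 1 - 1 = n from rfl, Pi.pow_apply] at h3
    push_cast at h3
    have h4 : cos x ^ (n+1) * u'' x = -(cos x ^ (n+1)) + ((n:ℝ)+1) * cos x ^ n * sin x * u' x := by
      linear_combination h3
    have h5 : cos x ^ (n+1) * (-1 + ((n:ℝ)+1) * tan x * u' x)
        = -(cos x ^ (n+1)) + ((n:ℝ)+1) * cos x ^ n * sin x * u' x := by
      rw [tan_eq_sin_div_cos, pow_succ]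
      field_simp
    exact mul_left_cancel₀ (pow_ne_zero _ hc.ne') (h4.trans h5.symm)
  -- Step 3 : f > (n+1) tan on (0, π/2)
  have hgpos : ∀ lam ∈ Ioo (0:ℝ) (π/2), 0 < f lam - ((n:ℝ)+1) * tan lam := by
    intro lam hlam
    obtain ⟨hl0, hl2⟩ := hlam
    have hIcc : Icc (0:ℝ) lam ⊆ Ico 0 (π/2) := fun x hx => ⟨hx.1, lt_of_le_of_lt hx.2 hl2⟩
    have hprimc : ContinuousOn (fun s => ∫ t in (0:ℝ)..s, f t) (Icc 0 lam) := by
      have := intervalIntegral.continuousOn_primitive_interval (f := f) (a := 0) (b := lam)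
        (μ := volume) (by rw [uIcc_of_le hl0.le]; exact (hfc.mono hIcc).integrableOn_Icc)
      rwa [uIcc_of_le hl0.le] at this
    have hJd : ∀ x ∈ Ioo (0:ℝ) lam, HasDerivAt (fun s => ∫ t in (0:ℝ)..s, f t) (f x) x := by
      intro x hx
      have hxI : x ∈ Ioo (0:ℝ) (π/2) := ⟨hx.1, hx.2.trans hl2⟩
      refine intervalIntegral.integral_hasDerivAt_right ?_
        (hfo.stronglyMeasurableAtFilter isOpen_Ioo x hxI)
        (hfo.continuousAt (Ioo_mem_nhds hxI.1 hxI.2))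
      refine ContinuousOn.intervalIntegrable (hfc.mono ?_)
      rw [uIcc_of_le hx.1.le]
      exact fun y hy => ⟨hy.1, lt_of_le_of_lt hy.2 hxI.2⟩
    have hmono : StrictMonoOn
        (fun s => exp (∫ t in (0:ℝ)..s, f t) * (f s - ((n:ℝ)+1) * tan s)) (Icc 0 lam) := by
      apply strictMonoOn_of_deriv_pos (convex_Icc _ _)
      · exact (Real.continuous_exp.comp_continuousOn hprimc).mul
          ((hfc.mono hIcc).sub (continuousOn_const.mul (htanc.mono hIcc)))
      · intro x hx
        rw [interior_Icc] at hx
        have hxI : x ∈ Ioo (0:ℝ) (π/2) := ⟨hx.1, hx.2.trans hl2⟩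
        have hc := hcos x hxI
        have hD : HasDerivAt (fun s => exp (∫ t in (0:ℝ)..s, f t) * (f s - ((n:ℝ)+1) * tan s))
            (exp (∫ t in (0:ℝ)..x, f t) * ((jM - ((n:ℝ)+1)) / cos x ^ 2)) x := by
          have h1 := ((hJd x hx).exp).mul
            ((hf x hxI).sub ((Real.hasDerivAt_tan hc.ne').const_mul ((n:ℝ)+1)))
          refine h1.congr_deriv ?_
          simp only [Pi.sub_apply]
          field_simp
          ring
        rw [hD.deriv]
        exact mul_pos (exp_pos _) (div_pos (by linarith) (pow_pos hc 2))
    have h01 := hmono (left_mem_Icc.2 hl0.le) (right_mem_Icc.2 hl0.le) hl0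
    simp only [intervalIntegral.integral_same, Real.exp_zero, hf0, Real.tan_zero,
      mul_zero, sub_zero, zero_sub, one_mul] at h01
    have hE := Real.exp_pos (∫ t in (0:ℝ)..lam, f t)
    by_contra hcontra
    push_neg at hcontra
    linarith [h01, mul_nonneg hE.le (neg_nonneg.2 hcontra)]
  -- uniqueness
  have huniq : ∀ a ∈ Ioo (0:ℝ) (π/2), ∀ b ∈ Ioo (0:ℝ) (π/2), a < b →
      u' a * (((n:ℝ)+1) * tan a - f a) - 1 = 0 →
      u' b * (((n:ℝ)+1) * tan b - f b) - 1 = 0 → False := by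
    intro a ha b hb hab hza hzb
    have hIcc : Icc a b ⊆ Ioo (0:ℝ) (π/2) := fun x hx =>
      ⟨lt_of_lt_of_le ha.1 hx.1, lt_of_le_of_lt hx.2 hb.2⟩
    have hIcc' : Icc a b ⊆ Ico 0 (π/2) := hIcc.trans Ioo_subset_Ico_self
    have hhc : ContinuousOn (fun t => ((n:ℝ)+1) * tan t - f t) (Ioo (0:ℝ) (π/2)) :=
      (continuousOn_const.mul (htanc.mono Ioo_subset_Ico_self)).sub hfo
    have hprimc : ContinuousOn (fun s => ∫ t in a..s, (((n:ℝ)+1) * tan t - f t)) (Icc a b) := by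
      have := intervalIntegral.continuousOn_primitive_interval (a := a) (b := b) (μ := volume)
        (f := fun t => ((n:ℝ)+1) * tan t - f t)
        (by rw [uIcc_of_le hab.le]; exact (hhc.mono hIcc).integrableOn_Icc)
      rwa [uIcc_of_le hab.le] at this
    have hHd : ∀ x ∈ Ioo a b, HasDerivAt (fun s => ∫ t in a..s, (((n:ℝ)+1) * tan t - f t))
        (((n:ℝ)+1) * tan x - f x) x := by
      intro x hx
      have hxI : x ∈ Ioo (0:ℝ) (π/2) := hIcc ⟨hx.1.le, hx.2.le⟩
      refine intervalIntegral.integral_hasDerivAt_right ?_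
        (hhc.stronglyMeasurableAtFilter isOpen_Ioo x hxI)
        (hhc.continuousAt (Ioo_mem_nhds hxI.1 hxI.2))
      refine ContinuousOn.intervalIntegrable (hhc.mono ?_)
      rw [uIcc_of_le hx.1.le]
      exact fun y hy => ⟨lt_of_lt_of_le ha.1 hy.1, lt_of_le_of_lt hy.2 hxI.2⟩
    have hmono : StrictMonoOn
        (fun s => exp (-(∫ t in a..s, (((n:ℝ)+1) * tan t - f t))) *
          (u' s * (((n:ℝ)+1) * tan s - f s) - 1)) (Icc a b) := by
      apply strictMonoOn_of_deriv_pos (convex_Icc _ _)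
      · exact (Real.continuous_exp.comp_continuousOn hprimc.neg).mul
          (((hu'c.mono hIcc').mul ((continuousOn_const.mul (htanc.mono hIcc')).sub
            (hfc.mono hIcc'))).sub continuousOn_const)
      · intro x hx
        rw [interior_Icc] at hx
        have hxI : x ∈ Ioo (0:ℝ) (π/2) := hIcc ⟨hx.1.le, hx.2.le⟩
        have hc := hcos x hxI
        have hD : HasDerivAt
            (fun s => exp (-(∫ t in a..s, (((n:ℝ)+1) * tan t - f t))) *
              (u' s * (((n:ℝ)+1) * tan s - f s) - 1))
            (exp (-(∫ t in a..x, (((n:ℝ)+1) * tan t - f t))) *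
              ((-(u' x)) * (jM - ((n:ℝ)+1)) / cos x ^ 2)) x := by
          have hσd : HasDerivAt (fun s => u' s * (((n:ℝ)+1) * tan s - f s) - 1)
              (u'' x * (((n:ℝ)+1) * tan x - f x) + u' x * (((n:ℝ)+1) * (1 / cos x ^ 2)
                - (-(f x)^2 + ((n:ℝ)+1) * tan x * f x + jM / cos x ^ 2))) x :=
            ((hu' x (hsub hxI)).mul (((Real.hasDerivAt_tan hc.ne').const_mul ((n:ℝ)+1)).sub
              (hf x hxI))).sub_const 1
          have h1 := (((hHd x hx).neg).exp).mul hσd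
          refine h1.congr_deriv ?_
          simp only [Pi.neg_apply]
          rw [hu''eq x hxI]
          field_simp
          ring
        rw [hD.deriv]
        have hun := hu'neg x hxI
        exact mul_pos (exp_pos _) (div_pos (mul_pos (by linarith) (by linarith)) (pow_pos hc 2))
    have h1 := hmono (left_mem_Icc.2 hab.le) (right_mem_Icc.2 hab.le) hab
    simp only [hza, hzb, mul_zero] at h1
    exact lt_irrefl 0 h1
  -- existence of a point where sigma is positive
  have hexists : ∃ b ∈ Ioo (0:ℝ) (π/2), 0 < u' b * (((n:ℝ)+1) * tan b - f b) - 1 := by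
    by_contra hcon
    push_neg at hcon
    obtain ⟨c0, hc0def⟩ : ∃ r : ℝ, r = ∫ s in (0:ℝ)..(π/4), cos s ^ (n+1) := ⟨_, rfl⟩
    have hc0 : 0 < c0 := by rw [hc0def]; exact hIpos _ hπ4 hπ42
    obtain ⟨B, hBdef⟩ : ∃ r : ℝ, r = 1/c0 := ⟨_, rfl⟩
    have hB : 0 < B := by rw [hBdef]; exact one_div_pos.2 hc0
    have hgB : ∀ x, π/4 ≤ x → x < π/2 → f x - ((n:ℝ)+1) * tan x ≤ B := by
      intro x h1 h2
      have hx : x ∈ Ioo (0:ℝ) (π/2) := ⟨lt_of_lt_of_le hπ4 h1, h2⟩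
      have hIx : c0 ≤ ∫ s in (0:ℝ)..x, cos s ^ (n+1) := by
        have hadd := intervalIntegral.integral_add_adjacent_intervals (a := (0:ℝ)) (b := π/4)
          (c := x) (μ := volume) (hIcont.intervalIntegrable _ _) (hIcont.intervalIntegrable _ _)
        have hnn : 0 ≤ ∫ s in (π/4)..x, cos s ^ (n+1) :=
          intervalIntegral.integral_nonneg h1 (fun y hy => pow_nonneg
            (cos_nonneg_of_mem_Icc ⟨by linarith [hy.1], by linarith [hy.2]⟩) _)
        rw [hc0def]
        linarith [hadd, hnn]
      have h3 := hu'leI x hx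
      have h4 := hcon x hx
      have h5 := hgpos x hx
      rw [hBdef, le_div_iff₀ hc0]
      linarith [h4, mul_nonneg (by linarith : (0:ℝ) ≤ -u' x - c0) h5.le]
    obtain ⟨c, hcdef⟩ : ∃ r : ℝ, r = jM - ((n:ℝ)+1) := ⟨_, rfl⟩
    have hcpos : 0 < c := by rw [hcdef]; linarith
    obtain ⟨t1, ht1def⟩ : ∃ r : ℝ, r = 1 + (4/(3*c)) * (B^2 + ((n:ℝ)+1) * B) := ⟨_, rfl⟩
    have hBB : 0 < B^2 + ((n:ℝ)+1) * B :=
      add_pos_of_pos_of_nonneg (pow_pos hB 2) (mul_nonneg (by linarith) hB.le)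
    have ht1 : 1 < t1 := by
      have h : 0 < (4/(3*c)) * (B^2 + ((n:ℝ)+1) * B) :=
        mul_pos (div_pos (by norm_num) (by linarith)) hBB
      rw [ht1def]
      linarith
    obtain ⟨l1, hl1def⟩ : ∃ r : ℝ, r = arctan t1 := ⟨_, rfl⟩
    have hl1a : π/4 < l1 := by
      rw [hl1def, ← Real.arctan_one]
      exact Real.arctan_strictMono ht1
    have hl1b : l1 < π/2 := by rw [hl1def]; exact Real.arctan_lt_pi_div_two _
    have htanl1 : tan l1 = t1 := by rw [hl1def]; exact Real.tan_arctan t1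
    obtain ⟨t2, ht2def⟩ : ∃ r : ℝ, r = t1 + 4*(B+1)/c := ⟨_, rfl⟩
    have ht12 : t1 < t2 := by
      have h : 0 < 4*(B+1)/c := div_pos (by linarith) hcpos
      rw [ht2def]
      linarith
    obtain ⟨l2, hl2def⟩ : ∃ r : ℝ, r = arctan t2 := ⟨_, rfl⟩
    have hl12 : l1 < l2 := by rw [hl1def, hl2def]; exact Real.arctan_strictMono ht12
    have hl2b : l2 < π/2 := by rw [hl2def]; exact Real.arctan_lt_pi_div_two _
    have htanl2 : tan l2 = t2 := by rw [hl2def]; exact Real.tan_arctan t2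
    have hIccsub : Icc l1 l2 ⊆ Ioo (0:ℝ) (π/2) := fun x hx =>
      ⟨by linarith [hx.1], lt_of_le_of_lt hx.2 hl2b⟩
    have hψd : ∀ x ∈ Ioo (0:ℝ) (π/2),
        HasDerivAt (fun s => f s - ((n:ℝ)+1) * tan s - (c/4) * tan s)
        ((-(f x)^2 + ((n:ℝ)+1) * tan x * f x + jM / cos x ^ 2) - ((n:ℝ)+1) * (1/cos x ^ 2)
          - (c/4) * (1/cos x ^ 2)) x := by
      intro x hx
      have hc' := (hcos x hx).ne'
      exact ((hf x hx).sub ((Real.hasDerivAt_tan hc').const_mul ((n:ℝ)+1))).sub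
        ((Real.hasDerivAt_tan hc').const_mul (c/4))
    have hmono : MonotoneOn (fun s => f s - ((n:ℝ)+1) * tan s - (c/4) * tan s) (Icc l1 l2) := by
      apply monotoneOn_of_deriv_nonneg (convex_Icc _ _)
      · have hs := hIccsub.trans Ioo_subset_Ico_self
        exact ((hfc.mono hs).sub (continuousOn_const.mul (htanc.mono hs))).sub
          (continuousOn_const.mul (htanc.mono hs))
      · intro x hx
        rw [interior_Icc] at hx
        exact ((hψd x (hIccsub (Ioo_subset_Icc_self hx))).differentiableAt).differentiableWithinAt
      · intro x hx
        rw [interior_Icc] at hx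
        have hxI : x ∈ Ioo (0:ℝ) (π/2) := hIccsub (Ioo_subset_Icc_self hx)
        rw [(hψd x hxI).deriv]
        have hcx := hcos x hxI
        have hsec : 1/cos x ^ 2 = 1 + tan x ^ 2 := by
          rw [← Real.inv_one_add_tan_sq hcx.ne', one_div, inv_inv]
        have htx : t1 ≤ tan x := by
          rw [← htanl1]
          exact (strictMonoOn_tan ⟨by linarith, hl1b⟩ ⟨by linarith [hxI.1], hxI.2⟩ hx.1).le
        have hgx := hgpos x hxI
        have hgBx := hgB x (by linarith [hx.1]) hxI.2
        have hkey : (3*c/4) * (t1 - 1) = B^2 + ((n:ℝ)+1)*B := by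
          rw [ht1def]
          field_simp
          ring
        have ht0 : (1:ℝ) ≤ tan x := by linarith
        have hdiv : jM / cos x ^ 2 = jM * (1/cos x ^ 2) := by ring
        rw [hdiv, hsec]
        have hrw : (-(f x)^2 + ((n:ℝ)+1) * tan x * f x + jM * (1 + tan x ^ 2))
              - ((n:ℝ)+1) * (1 + tan x ^ 2) - (c/4) * (1 + tan x ^ 2)
            = -(f x - ((n:ℝ)+1) * tan x)^2 - ((n:ℝ)+1) * tan x * (f x - ((n:ℝ)+1) * tan x)
              + (3*c/4) * (1 + tan x ^ 2) := by
          rw [hcdef]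
          ring
        rw [hrw]
        have hAt : (0:ℝ) ≤ ((n:ℝ)+1) * tan x := mul_nonneg (by linarith) (by linarith)
        have s1 : (f x - ((n:ℝ)+1) * tan x)^2 ≤ B * (f x - ((n:ℝ)+1) * tan x) := by
          linarith [mul_nonneg (sub_nonneg.2 hgBx) hgx.le]
        have s2 : ((n:ℝ)+1) * tan x * (f x - ((n:ℝ)+1) * tan x) ≤ ((n:ℝ)+1) * tan x * B :=
          mul_le_mul_of_nonneg_left hgBx hAt
        have s3a : f x - ((n:ℝ)+1) * tan x ≤ B * tan x := by
          linarith [hgBx, mul_nonneg hB.le (sub_nonneg.2 ht0)]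
        have s3 : B * (f x - ((n:ℝ)+1) * tan x) ≤ B * (B * tan x) :=
          mul_le_mul_of_nonneg_left s3a hB.le
        have s4 : (B^2 + ((n:ℝ)+1)*B) * tan x ≤ (3*c/4) * ((tan x - 1) * tan x) := by
          have h1 : (B^2 + ((n:ℝ)+1)*B) * tan x = (3*c/4) * ((t1 - 1) * tan x) := by
            rw [← hkey]; ring
          rw [h1]
          have h2 : 0 ≤ (3*c/4) * ((tan x - t1) * tan x) :=
            mul_nonneg (by linarith) (mul_nonneg (by linarith) (by linarith))
          linarith [h2]
        have s5 : (3*c/4) * ((tan x - 1) * tan x) ≤ (3*c/4) * (1 + tan x ^ 2) := by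
          linarith [mul_nonneg hcpos.le (by linarith : (0:ℝ) ≤ tan x + 1)]
        linarith [s1, s2, s3, s4, s5]
    have hm := hmono (left_mem_Icc.2 hl12.le) (right_mem_Icc.2 hl12.le) hl12.le
    simp only [htanl1, htanl2] at hm
    have hgl1 := hgpos l1 ⟨by linarith, hl1b⟩
    have hgl2 := hgB l2 (by linarith) hl2b
    rw [htanl1] at hgl1
    rw [htanl2] at hgl2
    have hc4 : (c/4) * (t2 - t1) = B + 1 := by
      rw [ht2def]
      field_simp
      ring
    linarith [hm, hgl1, hgl2, hc4]
  -- conclude by IVT and uniqueness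
  obtain ⟨b, hb, hσb⟩ := hexists
  have hIccb : Icc (0:ℝ) b ⊆ Ico 0 (π/2) := fun x hx => ⟨hx.1, lt_of_le_of_lt hx.2 hb.2⟩
  have hσc : ContinuousOn (fun s => u' s * (((n:ℝ)+1) * tan s - f s) - 1) (Icc 0 b) :=
    ((hu'c.mono hIccb).mul ((continuousOn_const.mul (htanc.mono hIccb)).sub
      (hfc.mono hIccb))).sub continuousOn_const
  have h0 : (fun s => u' s * (((n:ℝ)+1) * tan s - f s) - 1) 0 = -1 := by simp [hu0]
  have hivt := intermediate_value_Ioo hb.1.le hσc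
  have h0mem : (0:ℝ) ∈ Ioo ((fun s => u' s * (((n:ℝ)+1) * tan s - f s) - 1) 0)
      ((fun s => u' s * (((n:ℝ)+1) * tan s - f s) - 1) b) := by
    rw [h0]
    exact ⟨by norm_num, hσb⟩
  obtain ⟨lam, hlam, hlameq⟩ := hivt h0mem
  have hlamI : lam ∈ Ioo (0:ℝ) (π/2) := ⟨hlam.1, hlam.2.trans hb.2⟩
  refine ⟨lam, ⟨hlamI, hlameq⟩, ?_⟩
  rintro y ⟨hy, hy0⟩
  by_contra hne
  rcases lt_or_gt_of_ne hne with h | h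
  · exact huniq y hy lam hlamI h hy0 hlameq
  · exact huniq lam hlamI y hy h hlameq hy0
end

section
/- Fix N ≥ 2, λ ∈ (0, π/2), and j ≥ 2. Then 1 = σ_j(λ_j) + 1 = ũ'(λ_j)((N-1)tan λ_j - f_j(λ_j)) ≥ (c_j - N + 1)·λ_j·tan λ_j, where c_j = (N-2+√((N-2)²+4γ_j))/2 and λ_j is the zero of σ_j; consequently λ_j ≤ arctan(g(j)) for some explicit bound, i.e. λ_j tan λ_j ≤ 1/(c_j - N + 1). -/
/-!
Integrating the torsion equation `(cos^{N-1} ũ')' = -cos^{N-1}` from `0` and using that `cos^{N-1}`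
decreases gives `-ũ'(λ) ≥ λ`. For the Riccati solution, `h = f_j - c tan` with `c = N - 2 + j`
satisfies `h' ≥ a h` for `a = (N - 1) tan - f_j - c tan` (the remainder is `(j - 1) c ≥ 0`),
so `h(0) = 0` forces `h ≥ 0`, i.e. `f_j ≥ c tan`. Hence
`1 = (-ũ'(λ_j)) (f_j(λ_j) - (N - 1) tan λ_j) ≥ (j - 1) λ_j tan λ_j`,
and `c_j - N + 1 = j - 1` because the radicand is `(N - 2 + 2j)²`.
-/

open Real Set

theorem nonneg_of_mul_le_deriv {h h' a : ℝ → ℝ} {x₀ x₁ : ℝ} (hx : x₀ ≤ x₁)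
    (hh : ContinuousOn h (Icc x₀ x₁)) (ha : ContinuousOn a (Icc x₀ x₁))
    (hderiv : ∀ x ∈ Ioo x₀ x₁, HasDerivAt h (h' x) x)
    (hineq : ∀ x ∈ Ioo x₀ x₁, a x * h x ≤ h' x) (h₀ : 0 ≤ h x₀) : 0 ≤ h x₁ := by
  set A : ℝ → ℝ := fun x => ∫ t in x₀..x, a t
  have hA_cont : ContinuousOn A (Icc x₀ x₁) := by
    have := intervalIntegral.continuousOn_primitive_interval (μ := MeasureTheory.volume)
      (a := x₀) (b := x₁) (f := a) (by rw [uIcc_of_le hx]; exact ha.integrableOn_Icc)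
    rwa [uIcc_of_le hx] at this
  have hA_deriv : ∀ x ∈ Ioo x₀ x₁, HasDerivAt A (a x) x := fun x hx' =>
    intervalIntegral.integral_hasDerivAt_right
      ((ha.mono (Icc_subset_Icc le_rfl hx'.2.le)).intervalIntegrable_of_Icc hx'.1.le)
      (ha.mono Ioo_subset_Icc_self |>.stronglyMeasurableAtFilter isOpen_Ioo x hx')
      (ha.continuousAt (Icc_mem_nhds hx'.1 hx'.2))
  -- `h · exp (-∫ a)` is nondecreasing, since its derivative is `(h' - a h) · exp (-∫ a)`.
  have hmono : MonotoneOn (fun x => h x * exp (-A x)) (Icc x₀ x₁) := by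
    have hφ : ∀ x ∈ Ioo x₀ x₁, HasDerivAt (fun x => h x * exp (-A x))
        (h' x * exp (-A x) + h x * (exp (-A x) * -a x)) x := fun x hx' =>
      (hderiv x hx').mul (hA_deriv x hx').neg.exp
    refine monotoneOn_of_deriv_nonneg (convex_Icc _ _) (hh.mul hA_cont.neg.rexp) ?_ ?_
    · rw [interior_Icc]
      exact fun x hx' => (hφ x hx').differentiableAt.differentiableWithinAt
    · rw [interior_Icc]
      intro x hx'
      rw [(hφ x hx').deriv]
      nlinarith [hineq x hx', exp_pos (-A x)]
  have hends := hmono (left_mem_Icc.2 hx) (right_mem_Icc.2 hx) hx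
  simp only [A, intervalIntegral.integral_same, neg_zero, exp_zero, mul_one] at hends
  exact nonneg_of_mul_nonneg_left (h₀.trans hends) (exp_pos _)

theorem le_neg_sub_of_hasDerivAt_mul {w v : ℝ → ℝ} {a b : ℝ} (hab : a ≤ b)
    (hw : AntitoneOn w (Icc a b)) (hwb : 0 < w b) (hv : v a = 0)
    (hderiv : ∀ x ∈ Icc a b, HasDerivAt (fun s => w s * v s) (-w x) x) :
    v b ≤ -(b - a) := by
  have hw_int : IntervalIntegrable w MeasureTheory.volume a b :=
    AntitoneOn.intervalIntegrable (by rwa [uIcc_of_le hab])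
  have hftc : ∫ x in a..b, -w x = w b * v b - w a * v a :=
    intervalIntegral.integral_eq_sub_of_hasDerivAt (by rwa [uIcc_of_le hab]) hw_int.neg
  have hlower : (b - a) * w b ≤ ∫ x in a..b, w x := by
    simpa using intervalIntegral.integral_mono_on hab intervalIntegrable_const hw_int
      fun x hx => hw hx (right_mem_Icc.2 hab) hx.2
  rw [intervalIntegral.integral_neg, hv, mul_zero, sub_zero] at hftc
  nlinarith

theorem cos_pow_antitoneOn (n : ℕ) {b : ℝ} (hb : b ≤ π / 2) :
    AntitoneOn (fun x => cos x ^ n) (Icc 0 b) := fun x hx y hy hxy =>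
  pow_le_pow_left₀ (cos_nonneg_of_mem_Icc ⟨by linarith [hy.1, pi_pos], hy.2.trans hb⟩)
    (antitoneOn_cos ⟨hx.1, by linarith [hx.2, pi_pos]⟩ ⟨hy.1, by linarith [hy.2, pi_pos]⟩ hxy) n

theorem mul_tan_le_of_riccati_s15 {n k b : ℝ} {f : ℝ → ℝ} (hk : 1 ≤ k) (hnk : 0 ≤ n - 2 + k)
    (hb : b ∈ Ico 0 (π / 2)) (hf0 : f 0 = 0) (hfc : ContinuousOn f (Icc 0 b))
    (hf : ∀ x ∈ Ioo 0 b, HasDerivAt f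
      (-(f x) ^ 2 + (n - 1) * tan x * f x + k * (n - 2 + k) / cos x ^ 2) x) :
    (n - 2 + k) * tan b ≤ f b := by
  set c := n - 2 + k
  have hcos : ∀ x ∈ Icc 0 b, 0 < cos x := fun x hx =>
    cos_pos_of_mem_Ioo ⟨by linarith [hx.1, pi_pos], hx.2.trans_lt hb.2⟩
  have htan : ContinuousOn tan (Icc 0 b) := fun x hx =>
    (continuousAt_tan.2 (hcos x hx).ne').continuousWithinAt
  have hnonneg := nonneg_of_mul_le_deriv (h := fun x => f x - c * tan x)
    (a := fun x => (n - 1) * tan x - f x - c * tan x) hb.1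
    (hfc.sub (continuousOn_const.mul htan))
    ((continuousOn_const.mul htan).sub hfc |>.sub (continuousOn_const.mul htan))
    (fun x hx => (hf x hx).sub ((hasDerivAt_tan (hcos x (Ioo_subset_Icc_self hx)).ne').const_mul c))
    (fun x hx => by
      have hsec : 1 / cos x ^ 2 = 1 + tan x ^ 2 := by
        rw [one_div, ← inv_one_add_tan_sq (hcos x (Ioo_subset_Icc_self hx)).ne', inv_inv]
      rw [div_eq_mul_one_div _ (cos x ^ 2), hsec]
      nlinarith)
    (by simp [hf0])
  simpa using hnonneg

theorem bifurcation_value_quantitative_bound_general (N j : ℕ) (hj : 2 ≤ j)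
    (u' f : ℝ → ℝ) (lamj : ℝ) (hlamj : lamj ∈ Ioo (0:ℝ) (π/2))
    (hu0 : u' 0 = 0)
    (hode : ∀ θ ∈ Ioo (-(π/2)) (π/2),
      HasDerivAt (fun s => Real.cos s ^ (N - 1) * u' s) (-(Real.cos θ ^ (N - 1))) θ)
    (hf0 : f 0 = 0) (hfc : ContinuousOn f (Ico 0 (π/2)))
    (hf : ∀ lam ∈ Ioo (0:ℝ) (π/2),
      HasDerivAt f (-(f lam)^2 + ((N:ℝ) - 1) * Real.tan lam * f lam
        + ((j:ℝ) * ((N:ℝ) - 2 + (j:ℝ))) / (Real.cos lam)^2) lam)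
    (hzero : u' lamj * (((N:ℝ) - 1) * Real.tan lamj - f lamj) - 1 = 0) :
    u' lamj * (((N:ℝ) - 1) * Real.tan lamj - f lamj) = 1 ∧
    ((((N:ℝ) - 2 + Real.sqrt (((N:ℝ) - 2)^2 + 4 * ((j:ℝ) * ((N:ℝ) - 2 + (j:ℝ))))) / 2)
        - (N:ℝ) + 1) * (lamj * Real.tan lamj) ≤ 1 ∧
    lamj * Real.tan lamj ≤
      1 / ((((N:ℝ) - 2 + Real.sqrt (((N:ℝ) - 2)^2 + 4 * ((j:ℝ) * ((N:ℝ) - 2 + (j:ℝ))))) / 2)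
        - (N:ℝ) + 1) := by
  obtain ⟨hlam_pos, hlam_lt⟩ := hlamj
  have hN : (0:ℝ) ≤ N := N.cast_nonneg
  have hj' : (2:ℝ) ≤ j := by exact_mod_cast hj
  have hc : ((N:ℝ) - 2 + √(((N:ℝ) - 2) ^ 2 + 4 * ((j:ℝ) * ((N:ℝ) - 2 + j)))) / 2 - N + 1
      = (j:ℝ) - 1 := by
    rw [show ((N:ℝ) - 2) ^ 2 + 4 * ((j:ℝ) * ((N:ℝ) - 2 + j)) = ((N:ℝ) - 2 + 2 * j) ^ 2 by ring,
      sqrt_sq (by linarith)]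
    ring
  have hu' : u' lamj ≤ -lamj := by
    simpa using le_neg_sub_of_hasDerivAt_mul hlam_pos.le (cos_pow_antitoneOn (N - 1) hlam_lt.le)
      (pow_pos (cos_pos_of_mem_Ioo ⟨by linarith, hlam_lt⟩) _) hu0
      fun x hx => hode x ⟨by linarith [hx.1], hx.2.trans_lt hlam_lt⟩
  have hf' : ((N:ℝ) - 2 + j) * tan lamj ≤ f lamj :=
    mul_tan_le_of_riccati_s15 (by linarith) (by linarith) ⟨hlam_pos.le, hlam_lt⟩ hf0
      (hfc.mono (Icc_subset_Ico_right hlam_lt)) fun x hx => hf x ⟨hx.1, hx.2.trans hlam_lt⟩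
  have htan : 0 < tan lamj := tan_pos_of_pos_of_lt_pi_div_two hlam_pos hlam_lt
  have hbound : ((j:ℝ) - 1) * (lamj * tan lamj) ≤ 1 :=
    calc ((j:ℝ) - 1) * (lamj * tan lamj) = lamj * (((j:ℝ) - 1) * tan lamj) := by ring
      _ ≤ -u' lamj * (f lamj - ((N:ℝ) - 1) * tan lamj) :=
        mul_le_mul (by linarith) (by linarith) (by nlinarith) (by linarith)
      _ = 1 := by linear_combination hzero
  rw [hc]
  exact ⟨by linarith, hbound, by rwa [le_div_iff₀ (by linarith), mul_comm]⟩

/-- At the zero `λⱼ` of `σⱼ` one has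
`1 = ũ'(λⱼ)((N-1)tan λⱼ - fⱼ(λⱼ)) ≥ (cⱼ - N + 1) λⱼ tan λⱼ`, where
`cⱼ = (N-2+√((N-2)²+4γⱼ))/2`; in particular `λⱼ tan λⱼ ≤ 1/(cⱼ - N + 1)`. -/
theorem bifurcation_value_quantitative_bound (N j : ℕ) (hN : 2 ≤ N) (hj : 2 ≤ j)
    (u u' f : ℝ → ℝ) (lamj : ℝ) (hlamj : lamj ∈ Ioo (0:ℝ) (π/2))
    (hu0 : u' 0 = 0)
    (hu : ∀ θ ∈ Ioo (-(π/2)) (π/2), HasDerivAt u (u' θ) θ)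
    (hode : ∀ θ ∈ Ioo (-(π/2)) (π/2),
      HasDerivAt (fun s => Real.cos s ^ (N - 1) * u' s) (-(Real.cos θ ^ (N - 1))) θ)
    (hf0 : f 0 = 0) (hfc : ContinuousOn f (Ico 0 (π/2)))
    (hf : ∀ lam ∈ Ioo (0:ℝ) (π/2),
      HasDerivAt f (-(f lam)^2 + ((N:ℝ) - 1) * Real.tan lam * f lam
        + ((j:ℝ) * ((N:ℝ) - 2 + (j:ℝ))) / (Real.cos lam)^2) lam)
    (hzero : u' lamj * (((N:ℝ) - 1) * Real.tan lamj - f lamj) - 1 = 0) :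
    u' lamj * (((N:ℝ) - 1) * Real.tan lamj - f lamj) = 1 ∧
    ((((N:ℝ) - 2 + Real.sqrt (((N:ℝ) - 2)^2 + 4 * ((j:ℝ) * ((N:ℝ) - 2 + (j:ℝ))))) / 2)
        - (N:ℝ) + 1) * (lamj * Real.tan lamj) ≤ 1 ∧
    lamj * Real.tan lamj ≤
      1 / ((((N:ℝ) - 2 + Real.sqrt (((N:ℝ) - 2)^2 + 4 * ((j:ℝ) * ((N:ℝ) - 2 + (j:ℝ))))) / 2)
        - (N:ℝ) + 1) :=
  bifurcation_value_quantitative_bound_general N j hj u' f lamj hlamj hu0 hode hf0 hfc hf hzero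
end

section
/- Fix N ≥ 2 and λ ∈ (0, π/2), and define σ_j(λ) = ũ'(λ)((N-1)tan λ - f_j(λ)) - 1 for each j ≥ 0, where f_j is the Riccati solution with γ_j = j(N-2+j). Then 0 < liminf_{j→∞} σ_j(λ)/j ≤ limsup_{j→∞} σ_j(λ)/j < ∞. -/
open Real Set Filter Topology


private lemma cos_pos_of_Ico {t : ℝ} (ht : t ∈ Ico (0:ℝ) (π/2)) : 0 < Real.cos t :=
  Real.cos_pos_of_mem_Ioo ⟨by linarith [ht.1, Real.pi_pos], ht.2⟩

private lemma tan_contOn : ContinuousOn Real.tan (Ico (0:ℝ) (π/2)) := fun _ ht =>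
  (Real.continuousAt_tan.mpr (ne_of_gt (cos_pos_of_Ico ht))).continuousWithinAt

private lemma inv_cos_sq {t : ℝ} (hc : Real.cos t ≠ 0) :
    1 / Real.cos t ^ 2 = Real.tan t ^ 2 + 1 := by
  rw [Real.tan_eq_sin_div_cos]
  field_simp
  exact (Real.sin_sq_add_cos_sq t).symm

/-- One-sided Gronwall comparison: if `w' ≤ a·w` on `(0,l)` and `w 0 ≤ 0` then `w l ≤ 0`. -/
private lemma gronwall_aux {l : ℝ} (hl0 : 0 < l) (hl2 : l < π/2)
    (w w' a : ℝ → ℝ)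
    (hw : ContinuousOn w (Icc 0 l))
    (hw' : ∀ t ∈ Ioo (0:ℝ) l, HasDerivAt w (w' t) t)
    (ha : ContinuousOn a (Ico 0 (π/2)))
    (hcmp : ∀ t ∈ Ioo (0:ℝ) l, w' t ≤ a t * w t)
    (h0 : w 0 ≤ 0) : w l ≤ 0 := by
  have hsub : Icc (0:ℝ) l ⊆ Ico 0 (π/2) := fun x hx => ⟨hx.1, lt_of_le_of_lt hx.2 hl2⟩
  have hsubO : Ioo (0:ℝ) (π/2) ⊆ Ico 0 (π/2) := Ioo_subset_Ico_self
  have hsub2 : Ioo (0:ℝ) l ⊆ Ioo 0 (π/2) := Ioo_subset_Ioo le_rfl hl2.le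
  have haI : ContinuousOn a (Icc 0 l) := ha.mono hsub
  set A : ℝ → ℝ := fun t => ∫ s in (0:ℝ)..t, a s with hAdef
  have hAc : ContinuousOn A (Icc 0 l) := by
    have h1 : MeasureTheory.IntegrableOn a (uIcc 0 l) := by
      rw [uIcc_of_le hl0.le]
      exact haI.integrableOn_compact isCompact_Icc
    simpa [uIcc_of_le hl0.le] using intervalIntegral.continuousOn_primitive_interval h1
  have hA' : ∀ t ∈ Ioo (0:ℝ) l, HasDerivAt A (a t) t := by
    intro t ht
    have hint : IntervalIntegrable a MeasureTheory.volume 0 t :=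
      (haI.mono (by rw [uIcc_of_le ht.1.le]; exact Icc_subset_Icc le_rfl ht.2.le)).intervalIntegrable
    have hmeas : StronglyMeasurableAtFilter a (𝓝 t) MeasureTheory.volume :=
      (ha.mono hsubO).stronglyMeasurableAtFilter isOpen_Ioo t (hsub2 ht)
    have hcont : ContinuousAt a t :=
      (ha.mono hsubO).continuousAt (isOpen_Ioo.mem_nhds (hsub2 ht))
    exact intervalIntegral.integral_hasDerivAt_right hint hmeas hcont
  set g : ℝ → ℝ := fun t => w t * Real.exp (-(A t)) with hgdef
  have hgc : ContinuousOn g (Icc 0 l) :=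
    hw.mul (Real.continuous_exp.comp_continuousOn hAc.neg)
  have hg' : ∀ t ∈ Ioo (0:ℝ) l,
      HasDerivAt g (w' t * Real.exp (-(A t)) + w t * (Real.exp (-(A t)) * (-(a t)))) t := by
    intro t ht
    exact (hw' t ht).mul (((hA' t ht).neg).exp)
  have hanti : AntitoneOn g (Icc 0 l) := by
    apply antitoneOn_of_deriv_nonpos (convex_Icc 0 l) hgc
    · intro t ht
      rw [interior_Icc] at ht
      exact ((hg' t ht).differentiableAt).differentiableWithinAt
    · intro t ht
      rw [interior_Icc] at ht
      rw [(hg' t ht).deriv]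
      have hE : 0 < Real.exp (-(A t)) := Real.exp_pos _
      have := hcmp t ht
      nlinarith
  have hgl : g l ≤ g 0 := hanti (left_mem_Icc.mpr hl0.le) (right_mem_Icc.mpr hl0.le) hl0.le
  have hg0 : g 0 = w 0 := by
    simp [hgdef, hAdef, intervalIntegral.integral_same]
  have : g l ≤ 0 := le_trans hgl (by rw [hg0]; exact h0)
  have hE : 0 < Real.exp (-(A l)) := Real.exp_pos _
  simp only [hgdef] at this
  nlinarith


private lemma f_lower (N : ℕ) (hN : 2 ≤ N) {l : ℝ} (hl : l ∈ Ioo (0:ℝ) (π/2))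
    (f : ℕ → ℝ → ℝ) (hf0 : ∀ j : ℕ, f j 0 = 0)
    (hfc : ∀ j : ℕ, ContinuousOn (f j) (Ico 0 (π/2)))
    (hf : ∀ j : ℕ, ∀ t ∈ Ioo (0:ℝ) (π/2),
      HasDerivAt (f j) (-(f j t)^2 + ((N:ℝ) - 1) * Real.tan t * f j t
        + ((j:ℝ) * ((N:ℝ) - 2 + (j:ℝ))) / (Real.cos t)^2) t)
    (j : ℕ) (hj : 1 ≤ j) : (j:ℝ) * Real.tan l ≤ f j l := by
  obtain ⟨hl0, hl2⟩ := hl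
  have hsub : Icc (0:ℝ) l ⊆ Ico 0 (π/2) := fun x hx => ⟨hx.1, lt_of_le_of_lt hx.2 hl2⟩
  have hsub2 : Ioo (0:ℝ) l ⊆ Ioo 0 (π/2) := Ioo_subset_Ioo le_rfl hl2.le
  set n : ℝ := (N:ℝ) with hn
  have hn2 : (2:ℝ) ≤ n := by rw [hn]; exact_mod_cast hN
  have hj1 : (1:ℝ) ≤ (j:ℝ) := by exact_mod_cast hj
  set γ : ℝ := (j:ℝ) * (n - 2 + (j:ℝ)) with hγ
  have key : (fun t => (j:ℝ) * Real.tan t - f j t) l ≤ 0 := by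
    apply gronwall_aux hl0 hl2 _
      (fun t => (j:ℝ) * (1 / Real.cos t ^ 2)
        - (-(f j t)^2 + (n - 1) * Real.tan t * f j t + γ / (Real.cos t)^2))
      (fun t => -(f j t + (j:ℝ) * Real.tan t) + (n - 1) * Real.tan t)
    · exact ((tan_contOn.const_smul ((j:ℝ))).sub ((hfc j))).mono hsub
    · intro t ht
      have hc : Real.cos t ≠ 0 := ne_of_gt (cos_pos_of_Ico (Ioo_subset_Ico_self (hsub2 ht)))
      exact ((Real.hasDerivAt_tan hc).const_mul ((j:ℝ))).sub (hf j t (hsub2 ht))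
    · exact (((hfc j).add (tan_contOn.const_smul ((j:ℝ)))).neg).add
        (tan_contOn.const_smul (n - 1))
    · intro t ht
      have hc : Real.cos t ≠ 0 := ne_of_gt (cos_pos_of_Ico (Ioo_subset_Ico_self (hsub2 ht)))
      have h1 : 1 / Real.cos t ^ 2 = Real.tan t ^ 2 + 1 := inv_cos_sq hc
      have h2 : γ / Real.cos t ^ 2 = γ * (Real.tan t ^ 2 + 1) := by
        rw [div_eq_mul_one_div, h1]
      rw [h1, h2]
      have hj0 : (0:ℝ) ≤ (j:ℝ) := by linarith
      have key1 : (j:ℝ) * (3 - n - (j:ℝ)) ≤ 0 := by nlinarith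
      have key2 : (0:ℝ) ≤ (j:ℝ) * (2*n - 4) * Real.tan t ^ 2 :=
        mul_nonneg (mul_nonneg hj0 (by linarith)) (sq_nonneg _)
      nlinarith [key1, key2]
    · simp [hf0 j]
  simpa using key

private lemma f_upper (N : ℕ) (hN : 2 ≤ N) {l : ℝ} (hl : l ∈ Ioo (0:ℝ) (π/2))
    (f : ℕ → ℝ → ℝ) (hf0 : ∀ j : ℕ, f j 0 = 0)
    (hfc : ∀ j : ℕ, ContinuousOn (f j) (Ico 0 (π/2)))
    (hf : ∀ j : ℕ, ∀ t ∈ Ioo (0:ℝ) (π/2),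
      HasDerivAt (f j) (-(f j t)^2 + ((N:ℝ) - 1) * Real.tan t * f j t
        + ((j:ℝ) * ((N:ℝ) - 2 + (j:ℝ))) / (Real.cos t)^2) t)
    (j : ℕ) : f j l ≤ ((N:ℝ) + (j:ℝ)) / Real.cos l := by
  obtain ⟨hl0, hl2⟩ := hl
  have hsub : Icc (0:ℝ) l ⊆ Ico 0 (π/2) := fun x hx => ⟨hx.1, lt_of_le_of_lt hx.2 hl2⟩
  have hsub2 : Ioo (0:ℝ) l ⊆ Ioo 0 (π/2) := Ioo_subset_Ioo le_rfl hl2.le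
  set n : ℝ := (N:ℝ) with hn
  have hn2 : (2:ℝ) ≤ n := by rw [hn]; exact_mod_cast hN
  have hj0 : (0:ℝ) ≤ (j:ℝ) := Nat.cast_nonneg j
  set γ : ℝ := (j:ℝ) * (n - 2 + (j:ℝ)) with hγ
  set d : ℝ := n + (j:ℝ) with hd
  have hd0 : (0:ℝ) ≤ d := by rw [hd]; linarith
  have hcont_h : ContinuousOn (fun t => d / Real.cos t) (Ico 0 (π/2)) := fun t ht =>
    (continuousAt_const.div Real.continuous_cos.continuousAt
      (ne_of_gt (cos_pos_of_Ico ht))).continuousWithinAt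
  have key : (fun t => f j t - d / Real.cos t) l ≤ 0 := by
    apply gronwall_aux hl0 hl2 _
      (fun t => (-(f j t)^2 + (n - 1) * Real.tan t * f j t + γ / (Real.cos t)^2)
        - (0 * Real.cos t - d * (-Real.sin t)) / Real.cos t ^ 2)
      (fun t => -(f j t + d / Real.cos t) + (n - 1) * Real.tan t)
    · exact ((hfc j).sub hcont_h).mono hsub
    · intro t ht
      have hc : Real.cos t ≠ 0 := ne_of_gt (cos_pos_of_Ico (Ioo_subset_Ico_self (hsub2 ht)))
      exact (hf j t (hsub2 ht)).sub ((hasDerivAt_const t d).div (Real.hasDerivAt_cos t) hc)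
    · exact (((hfc j).add hcont_h).neg).add (tan_contOn.const_smul (n - 1))
    · intro t ht
      have hcpos : 0 < Real.cos t := cos_pos_of_Ico (Ioo_subset_Ico_self (hsub2 ht))
      have hc : Real.cos t ≠ 0 := ne_of_gt hcpos
      have heq : (-(f j t + d / Real.cos t) + (n - 1) * Real.tan t) * (f j t - d / Real.cos t)
          - ((-(f j t)^2 + (n - 1) * Real.tan t * f j t + γ / (Real.cos t)^2)
            - (0 * Real.cos t - d * (-Real.sin t)) / Real.cos t ^ 2)
          = (d^2 - (n-2)*d*Real.sin t - γ) / Real.cos t ^ 2 := by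
        rw [Real.tan_eq_sin_div_cos]
        field_simp
        ring
      have hnum : 0 ≤ d^2 - (n-2)*d*Real.sin t - γ := by
        have hint : 0 ≤ (n-2)*d*(1 - Real.sin t) :=
          mul_nonneg (mul_nonneg (by linarith) hd0) (by linarith [Real.sin_le_one t])
        nlinarith [hint]
      have : 0 ≤ (d^2 - (n-2)*d*Real.sin t - γ) / Real.cos t ^ 2 :=
        div_nonneg hnum (sq_nonneg _)
      linarith [heq ▸ this]
    · simp [hf0 j, Real.cos_zero]
      linarith
  have := key
  simp only at this
  have hclpos : 0 < Real.cos l := cos_pos_of_Ico ⟨hl0.le, hl2⟩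
  rw [hd] at this
  linarith


/-- For fixed `λ ∈ (0, π/2)`, the eigenvalues
`σⱼ(λ) = ũ'(λ)((N-1)tan λ - fⱼ(λ)) - 1` grow linearly in `j`:
`0 < liminf σⱼ(λ)/j ≤ limsup σⱼ(λ)/j < ∞`. -/
theorem sigma_linear_growth (N : ℕ) (hN : 2 ≤ N) (l : ℝ) (hl : l ∈ Ioo (0:ℝ) (π/2))
    (u u' : ℝ → ℝ) (f : ℕ → ℝ → ℝ)
    (hu0 : u' 0 = 0)
    (hu : ∀ θ ∈ Ioo (-(π/2)) (π/2), HasDerivAt u (u' θ) θ)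
    (hode : ∀ θ ∈ Ioo (-(π/2)) (π/2),
      HasDerivAt (fun s => Real.cos s ^ (N - 1) * u' s) (-(Real.cos θ ^ (N - 1))) θ)
    (hf0 : ∀ j : ℕ, f j 0 = 0) (hfc : ∀ j : ℕ, ContinuousOn (f j) (Ico 0 (π/2)))
    (hf : ∀ j : ℕ, ∀ t ∈ Ioo (0:ℝ) (π/2),
      HasDerivAt (f j) (-(f j t)^2 + ((N:ℝ) - 1) * Real.tan t * f j t
        + ((j:ℝ) * ((N:ℝ) - 2 + (j:ℝ))) / (Real.cos t)^2) t) :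
    0 < atTop.liminf
        (fun j : ℕ => (u' l * (((N:ℝ) - 1) * Real.tan l - f j l) - 1) / (j:ℝ)) ∧
    atTop.liminf
        (fun j : ℕ => (u' l * (((N:ℝ) - 1) * Real.tan l - f j l) - 1) / (j:ℝ)) ≤
      atTop.limsup
        (fun j : ℕ => (u' l * (((N:ℝ) - 1) * Real.tan l - f j l) - 1) / (j:ℝ)) ∧
    IsBoundedUnder (· ≤ ·) atTop
      (fun j : ℕ => (u' l * (((N:ℝ) - 1) * Real.tan l - f j l) - 1) / (j:ℝ)) := by
  
  obtain ⟨hl0, hl2⟩ := hl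
  have hpi : (0:ℝ) < π/2 := by linarith [Real.pi_pos]
  have hmemIoo : ∀ θ ∈ Icc (0:ℝ) l, θ ∈ Ioo (-(π/2)) (π/2) := fun θ hθ =>
    ⟨by linarith [hθ.1], by linarith [hθ.2]⟩
  -- u' l < 0
  have hu'neg : u' l < 0 := by
    have hanti : StrictAntiOn (fun θ => Real.cos θ ^ (N - 1) * u' θ) (Icc 0 l) := by
      apply strictAntiOn_of_deriv_neg (convex_Icc 0 l)
      · intro θ hθ
        exact ((hode θ (hmemIoo θ hθ)).continuousAt).continuousWithinAt
      · intro θ hθ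
        rw [interior_Icc] at hθ
        have hmem := hmemIoo θ (Ioo_subset_Icc_self hθ)
        rw [(hode θ hmem).deriv]
        have : 0 < Real.cos θ ^ (N - 1) := pow_pos (Real.cos_pos_of_mem_Ioo hmem) _
        linarith
    have hlt := hanti (left_mem_Icc.mpr hl0.le) (right_mem_Icc.mpr hl0.le) hl0
    simp only [Real.cos_zero, one_pow, hu0, one_mul, mul_zero] at hlt
    have hcl : 0 < Real.cos l ^ (N - 1) :=
      pow_pos (Real.cos_pos_of_mem_Ioo (hmemIoo l (right_mem_Icc.mpr hl0.le))) _
    nlinarith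
  have hT : 0 < Real.tan l := Real.tan_pos_of_pos_of_lt_pi_div_two hl0 hl2
  have hclpos : 0 < Real.cos l := Real.cos_pos_of_mem_Ioo (hmemIoo l (right_mem_Icc.mpr hl0.le))
  have hDpos : 0 < (Real.cos l)⁻¹ := inv_pos.mpr hclpos
  have heps : 0 < -u' l * Real.tan l := mul_pos (by linarith) hT
  have hn1 : (1:ℝ) ≤ (N:ℝ) := by exact_mod_cast Nat.one_le_of_lt hN
  set σ : ℕ → ℝ := fun j => (u' l * (((N:ℝ) - 1) * Real.tan l - f j l) - 1) / (j:ℝ) with hσ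
  -- eventual lower bound
  have htend := tendsto_const_div_atTop_nhds_zero_nat (u' l * (((N:ℝ) - 1) * Real.tan l) - 1)
  have hev1 : ∀ᶠ j : ℕ in atTop,
      -(-u' l * Real.tan l / 2) < (u' l * (((N:ℝ) - 1) * Real.tan l) - 1) / (j:ℝ) :=
    htend.eventually (eventually_gt_nhds (by linarith))
  have hlow : ∀ᶠ j : ℕ in atTop, -u' l * Real.tan l / 2 ≤ σ j := by
    filter_upwards [hev1, eventually_ge_atTop 1] with j h1 h2
    have hjpos : (0:ℝ) < (j:ℝ) := by exact_mod_cast Nat.lt_of_lt_of_le Nat.zero_lt_one h2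
    have hfl : (j:ℝ) * Real.tan l ≤ f j l := f_lower N hN ⟨hl0, hl2⟩ f hf0 hfc hf j h2
    have hK : -(-u' l * Real.tan l / 2) * (j:ℝ)
        < u' l * (((N:ℝ) - 1) * Real.tan l) - 1 := (lt_div_iff₀ hjpos).mp h1
    rw [hσ]
    simp only
    rw [le_div_iff₀ hjpos]
    nlinarith [mul_le_mul_of_nonneg_left hfl (by linarith : (0:ℝ) ≤ -u' l)]
  -- eventual upper bound
  have hup : ∀ᶠ j : ℕ in atTop,
      σ j ≤ |u' l * (((N:ℝ) - 1) * Real.tan l) - 1|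
        + -u' l * ((N:ℝ) + 1) * (Real.cos l)⁻¹ := by
    filter_upwards [eventually_ge_atTop 1] with j hj
    have hj1 : (1:ℝ) ≤ (j:ℝ) := by exact_mod_cast hj
    have hjpos : (0:ℝ) < (j:ℝ) := by linarith
    have hfu : f j l ≤ ((N:ℝ) + (j:ℝ)) * (Real.cos l)⁻¹ := by
      have := f_upper N hN ⟨hl0, hl2⟩ f hf0 hfc hf j
      rwa [div_eq_mul_inv] at this
    rw [hσ]
    simp only
    rw [div_le_iff₀ hjpos]
    have h3 : 0 ≤ -u' l * (Real.cos l)⁻¹ * (N:ℝ) * ((j:ℝ) - 1) :=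
      mul_nonneg (mul_nonneg (mul_nonneg (by linarith) hDpos.le) (by linarith)) (by linarith)
    have h4 : 0 ≤ |u' l * (((N:ℝ) - 1) * Real.tan l) - 1| * ((j:ℝ) - 1) :=
      mul_nonneg (abs_nonneg _) (by linarith)
    have h5 := le_abs_self (u' l * (((N:ℝ) - 1) * Real.tan l) - 1)
    nlinarith [mul_le_mul_of_nonneg_left hfu (by linarith : (0:ℝ) ≤ -u' l)]
  have hbddAbove : IsBoundedUnder (· ≤ ·) atTop σ := isBoundedUnder_of_eventually_le hup
  have hbddBelow : IsBoundedUnder (· ≥ ·) atTop σ := isBoundedUnder_of_eventually_ge hlow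
  refine ⟨?_, Filter.liminf_le_limsup hbddAbove hbddBelow, hbddAbove⟩
  have hle : -u' l * Real.tan l / 2 ≤ atTop.liminf σ :=
    Filter.le_liminf_of_le hbddAbove.isCoboundedUnder_ge hlow
  linarith
end
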